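/- arXiv:1811.05236 — 6 statements merged into one kernel-verified Lean document; each statement's English description precedes it below -/
import Mathlib

section
/- Let K be a field and let m, r, k be natural numbers with m ≥ 1 and r > k ≥ 0. There exists a short exact sequence in the category S: 0 → P_0^m → P_0^{m+r−1} ⊕ P_1^{k+1} → P_1^r ⊕ P_0^k → 0 (where P_0^0 denotes the zero object when k = 0); that is, there are morphisms u : P_0^m → P_0^{m+r−1} ⊕ P_1^{k+1} and p : P_0^{m+r−1} ⊕ P_1^{k+1} → P_1^r ⊕ P_0^k whose component sequences on both coordinates are short exact sequences of K[T]-modules. -/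
open Module

namespace LRGE

/-! ### Partitions and combinatorics of LR-pairs -/

/-- `f : ℕ → ℕ` is a partition: weakly decreasing with finitely many nonzero parts.
Part `i+1` of the partition is `f i` (0-indexed). -/
def IsPartition (f : ℕ → ℕ) : Prop := Antitone f ∧ ∃ N, ∀ n, N ≤ n → f n = 0

/-- Sum of the first `k` parts of `f`, i.e. `Σ_{i=1}^k f_i`. -/
def psum (f : ℕ → ℕ) (k : ℕ) : ℕ := ∑ i ∈ Finset.range k, f i

/-- The number of (nonzero) parts of a partition. -/
noncomputable def numParts (f : ℕ → ℕ) : ℕ := Set.ncard {i | f i ≠ 0}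

/-- `n(λ) = Σ_i (i-1) λ_i` (with 1-indexed parts; here `f i` is part `i+1`). -/
noncomputable def nstat (f : ℕ → ℕ) : ℕ := ∑ᶠ i, i * f i

/-- The partial sums of the β-partition of the generic extension `Y * X`,
where `X` has pair `(γX, βX)` and `Y` has pair `(γY, βY)`:
`Σ_{i=1}^k δ_i = Σ_{i=1}^k (βX_i + γY_i) + min (max (0, k - ℓ)) (Σ_{i=1}^k (βY_i - γY_i))`. -/
noncomputable def gbsum (βX γY βY : ℕ → ℕ) (k : ℕ) : ℕ :=
  (psum βX k + psum γY k) + min (k - numParts βX) (∑ i ∈ Finset.range k, (βY i - γY i))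

/-- The parts of the β-partition of the generic extension `Y * X`. -/
noncomputable def geBeta (βX γY βY : ℕ → ℕ) : ℕ → ℕ :=
  fun i => gbsum βX γY βY (i + 1) - gbsum βX γY βY i

/-- An LR-pair `(γ, β)`: both partitions and `γ_i ≤ β_i ≤ γ_i + 1` for all `i`. -/
def IsLRPair (γ β : ℕ → ℕ) : Prop :=
  IsPartition γ ∧ IsPartition β ∧ ∀ i, γ i ≤ β i ∧ β i ≤ γ i + 1

/-- the generic extension product on pairs `(γ, β)`: `gext Y X = Y * X`. -/
noncomputable def gext (Y X : (ℕ → ℕ) × (ℕ → ℕ)) : (ℕ → ℕ) × (ℕ → ℕ) :=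
  (fun i => X.1 i + Y.1 i, geBeta X.2 Y.1 Y.2)

/-- The empty LR-pair (the class of the zero object). -/
def punit : (ℕ → ℕ) × (ℕ → ℕ) := (fun _ => 0, fun _ => 0)

/-- `m`-fold iterated generic extension product of a pair with itself. -/
noncomputable def gpow (p : (ℕ → ℕ) × (ℕ → ℕ)) : ℕ → (ℕ → ℕ) × (ℕ → ℕ)
  | 0 => punit
  | 1 => p
  | n + 2 => gext p (gpow p (n + 1))

/-- The partition `(1^n)`. -/
def ones (n : ℕ) : ℕ → ℕ := fun i => if i < n then 1 else 0

/-- The partition with a single part `m` (empty if `m = 0`). -/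
def single (m : ℕ) : ℕ → ℕ := fun i => if i = 0 then m else 0

/-- The LR-pair of the picket `P_1^1`, namely `(∅, (1))`. -/
def p11 : (ℕ → ℕ) × (ℕ → ℕ) := (fun _ => 0, single 1)

/-- The LR-pair of the picket `P_0^1`, namely `((1), (1))`. -/
def p01 : (ℕ → ℕ) × (ℕ → ℕ) := (single 1, single 1)

/-- The dominance order on pairs of partitions: `P ⊴ Q` iff all partial sums of `P`
are at least those of `Q` (both for the γ- and the β-partitions). -/
def domLE (P Q : (ℕ → ℕ) × (ℕ → ℕ)) : Prop :=
  ∀ k, 1 ≤ k → psum Q.1 k ≤ psum P.1 k ∧ psum Q.2 k ≤ psum P.2 k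

/-- The partition (as a function `ℕ → ℕ`, parts in weakly decreasing order) whose
multiset of parts is the given multiset. -/
noncomputable def partOf (M : Multiset ℕ) : ℕ → ℕ :=
  fun i => ((M.sort (· ≤ ·)).reverse.getD i 0)

/-! ### Nilpotent linear operators and the category `S` -/

variable (K : Type) [Field K]

/-- The nilpotent `K[T]`-module `N_λ`. -/
abbrev NMod (lam : ℕ → ℕ) : Type := ∀ i : ℕ, Fin (lam i) → K

/-- Multiplication by `T` on `N_λ`. -/
def shiftMap (lam : ℕ → ℕ) : NMod K lam →ₗ[K] NMod K lam where
  toFun v := fun i j => if h : (j : ℕ) + 1 < lam i then v i ⟨(j : ℕ) + 1, h⟩ else 0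
  map_add' u v := by
    funext i j
    by_cases h : (j : ℕ) + 1 < lam i <;> simp [h]
  map_smul' c v := by
    funext i j
    by_cases h : (j : ℕ) + 1 < lam i <;> simp [h]

/-- Multiplication by `T` on the single Jordan block `N_(m)`, realized on `Fin m → K`. -/
def sh (m : ℕ) : (Fin m → K) →ₗ[K] (Fin m → K) where
  toFun v := fun j => if h : (j : ℕ) + 1 < m then v ⟨(j : ℕ) + 1, h⟩ else 0
  map_add' u v := by
    funext j
    by_cases h : (j : ℕ) + 1 < m <;> simp [h]
  map_smul' c v := by
    funext j
    by_cases h : (j : ℕ) + 1 < m <;> simp [h]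

/-- The inclusion `ι : N_(1) → N_(m)` with `ι(1) = T^(m-1)` (the socle generator,
realized as the basis vector with index `0`). -/
def iota (m : ℕ) : (Fin 1 → K) →ₗ[K] (Fin m → K) where
  toFun v := fun j => if (j : ℕ) = 0 then v 0 else 0
  map_add' u v := by
    funext j
    by_cases h : (j : ℕ) = 0 <;> simp [h]
  map_smul' c v := by
    funext j
    by_cases h : (j : ℕ) = 0 <;> simp [h]

/-- The Jordan type of the nilpotent operator `φ` is the partition `lam`:
`(V, φ)` is isomorphic to `N_lam` as a `K[T]`-module. -/
def JordanType {V : Type} [AddCommGroup V] [Module K V]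
    (φ : V →ₗ[K] V) (lam : ℕ → ℕ) : Prop :=
  IsPartition lam ∧ ∃ e : V ≃ₗ[K] NMod K lam, ∀ v, e (φ v) = shiftMap K lam (e v)

/-- The Jordan type of `coker f` (with the operator induced by `φ`) is the partition `γ`:
there is a `K[T]`-epimorphism `q : V₂ → N_γ` with kernel exactly the image of `f`. -/
def CokerType {V₁ V₂ : Type} [AddCommGroup V₁] [Module K V₁]
    [AddCommGroup V₂] [Module K V₂]
    (f : V₁ →ₗ[K] V₂) (φ : V₂ →ₗ[K] V₂) (γ : ℕ → ℕ) : Prop :=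
  IsPartition γ ∧ ∃ q : V₂ →ₗ[K] NMod K γ,
    Function.Surjective q ∧ LinearMap.ker q = LinearMap.range f ∧
    q ∘ₗ φ = shiftMap K γ ∘ₗ q

/-- The space `Hom_S(X, X')` of morphisms between the triples
`X = (V₁, V₂, f)` (with operators `φ₁, φ₂`) and `X' = (W₁, W₂, g)` (with operators
`ψ₁, ψ₂`): pairs `(p₁, p₂)` of `K[T]`-homomorphisms with `g ∘ p₁ = p₂ ∘ f`. -/
def homS {V₁ V₂ W₁ W₂ : Type}
    [AddCommGroup V₁] [Module K V₁] [AddCommGroup V₂] [Module K V₂]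
    [AddCommGroup W₁] [Module K W₁] [AddCommGroup W₂] [Module K W₂]
    (φ₁ : V₁ →ₗ[K] V₁) (φ₂ : V₂ →ₗ[K] V₂) (f : V₁ →ₗ[K] V₂)
    (ψ₁ : W₁ →ₗ[K] W₁) (ψ₂ : W₂ →ₗ[K] W₂) (g : W₁ →ₗ[K] W₂) :
    Submodule K ((V₁ →ₗ[K] W₁) × (V₂ →ₗ[K] W₂)) where
  carrier := {p | p.1 ∘ₗ φ₁ = ψ₁ ∘ₗ p.1 ∧ p.2 ∘ₗ φ₂ = ψ₂ ∘ₗ p.2 ∧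
    g ∘ₗ p.1 = p.2 ∘ₗ f}
  add_mem' := by
    intro p q hp hq
    obtain ⟨h1, h2, h3⟩ := hp
    obtain ⟨k1, k2, k3⟩ := hq
    refine ⟨?_, ?_, ?_⟩
    · simp only [Prod.fst_add, LinearMap.add_comp, LinearMap.comp_add, h1, k1]
    · simp only [Prod.snd_add, LinearMap.add_comp, LinearMap.comp_add, h2, k2]
    · simp only [Prod.fst_add, Prod.snd_add, LinearMap.add_comp, LinearMap.comp_add, h3, k3]
  zero_mem' := by
    refine ⟨?_, ?_, ?_⟩ <;>
      simp only [Prod.fst_zero, Prod.snd_zero, LinearMap.zero_comp, LinearMap.comp_zero]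
  smul_mem' := by
    intro c p hp
    obtain ⟨h1, h2, h3⟩ := hp
    refine ⟨?_, ?_, ?_⟩
    · simp only [Prod.smul_fst, LinearMap.smul_comp, LinearMap.comp_smul, h1]
    · simp only [Prod.smul_snd, LinearMap.smul_comp, LinearMap.comp_smul, h2]
    · simp only [Prod.smul_fst, Prod.smul_snd, LinearMap.smul_comp, LinearMap.comp_smul, h3]

/-- `Z = (Z₁, Z₂, fZ)` is an extension of `Y = (Y₁, Y₂, fY)` by `X = (X₁, X₂, fX)`:
there is a short exact sequence `0 → X → Z → Y → 0` in `S`, i.e. morphisms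
`u : X → Z` and `p : Z → Y` whose component sequences are short exact sequences
of `K[T]`-modules. -/
def IsExt {X₁ X₂ Z₁ Z₂ Y₁ Y₂ : Type}
    [AddCommGroup X₁] [Module K X₁] [AddCommGroup X₂] [Module K X₂]
    [AddCommGroup Z₁] [Module K Z₁] [AddCommGroup Z₂] [Module K Z₂]
    [AddCommGroup Y₁] [Module K Y₁] [AddCommGroup Y₂] [Module K Y₂]
    (φX₁ : X₁ →ₗ[K] X₁) (φX₂ : X₂ →ₗ[K] X₂) (fX : X₁ →ₗ[K] X₂)
    (φZ₁ : Z₁ →ₗ[K] Z₁) (φZ₂ : Z₂ →ₗ[K] Z₂) (fZ : Z₁ →ₗ[K] Z₂)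
    (φY₁ : Y₁ →ₗ[K] Y₁) (φY₂ : Y₂ →ₗ[K] Y₂) (fY : Y₁ →ₗ[K] Y₂) : Prop :=
  ∃ (u₁ : X₁ →ₗ[K] Z₁) (u₂ : X₂ →ₗ[K] Z₂) (p₁ : Z₁ →ₗ[K] Y₁) (p₂ : Z₂ →ₗ[K] Y₂),
    u₁ ∘ₗ φX₁ = φZ₁ ∘ₗ u₁ ∧ u₂ ∘ₗ φX₂ = φZ₂ ∘ₗ u₂ ∧ fZ ∘ₗ u₁ = u₂ ∘ₗ fX ∧
    p₁ ∘ₗ φZ₁ = φY₁ ∘ₗ p₁ ∧ p₂ ∘ₗ φZ₂ = φY₂ ∘ₗ p₂ ∧ fY ∘ₗ p₁ = p₂ ∘ₗ fZ ∧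
    Function.Injective u₁ ∧ Function.Injective u₂ ∧
    Function.Surjective p₁ ∧ Function.Surjective p₂ ∧
    LinearMap.range u₁ = LinearMap.ker p₁ ∧ LinearMap.range u₂ = LinearMap.ker p₂

end LRGE

namespace LRGE

/-- Auxiliary: the injection `N_m → N_{a} ⊕ N_{b}`, `v ↦ (v padded by zeros, -v_{m-1}·e₀)`. -/
def U2 (K : Type) [Field K] (m a b : ℕ) :
    (Fin m → K) →ₗ[K] ((Fin a → K) × (Fin b → K)) where
  toFun v :=
    ( fun i => if h : (i : ℕ) < m then v ⟨i, h⟩ else 0,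
      fun i => if h : (i : ℕ) = 0 ∧ m - 1 < m then -v ⟨m - 1, h.2⟩ else 0 )
  map_add' u v := by
    refine Prod.ext (funext fun i => ?_) (funext fun i => ?_) <;>
      simp only [Prod.fst_add, Prod.snd_add, Pi.add_apply]
    · by_cases h : (i : ℕ) < m
      · rw [dif_pos h, dif_pos h, dif_pos h]
      · rw [dif_neg h, dif_neg h, dif_neg h]; simp
    · by_cases h : (i : ℕ) = 0 ∧ m - 1 < m
      · rw [dif_pos h, dif_pos h, dif_pos h]; ring
      · rw [dif_neg h, dif_neg h, dif_neg h]; simp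
  map_smul' c v := by
    refine Prod.ext (funext fun i => ?_) (funext fun i => ?_) <;>
      simp only [RingHom.id_apply, Prod.smul_fst, Prod.smul_snd, Pi.smul_apply, smul_eq_mul]
    · by_cases h : (i : ℕ) < m
      · rw [dif_pos h, dif_pos h]
      · rw [dif_neg h, dif_neg h]; simp
    · by_cases h : (i : ℕ) = 0 ∧ m - 1 < m
      · rw [dif_pos h, dif_pos h]; ring
      · rw [dif_neg h, dif_neg h]; simp

/-- Auxiliary: the projection `N_{m+r-1} ⊕ N_{k+1} → N_r ⊕ N_k`. -/
def P2 (K : Type) [Field K] (m r k : ℕ) :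
    ((Fin (m + r - 1) → K) × (Fin (k + 1) → K)) →ₗ[K] ((Fin r → K) × (Fin k → K)) where
  toFun zw :=
    ( fun s => (if h : m - 1 + (s : ℕ) < m + r - 1 then zw.1 ⟨m - 1 + s, h⟩ else 0)
        + (if h : (s : ℕ) < k + 1 then zw.2 ⟨s, h⟩ else 0),
      fun i => zw.2 ⟨(i : ℕ) + 1, Nat.succ_lt_succ i.isLt⟩ )
  map_add' u v := by
    refine Prod.ext (funext fun s => ?_) (funext fun i => ?_) <;>
      simp only [Prod.fst_add, Prod.snd_add, Pi.add_apply]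
    · by_cases h1 : m - 1 + (s : ℕ) < m + r - 1 <;> by_cases h2 : (s : ℕ) < k + 1
      · simp only [dif_pos h1, dif_pos h2, Pi.add_apply]; ring
      · simp only [dif_pos h1, dif_neg h2, Pi.add_apply]; ring
      · simp only [dif_neg h1, dif_pos h2, Pi.add_apply]; ring
      · simp only [dif_neg h1, dif_neg h2, Pi.add_apply]; ring
  map_smul' c v := by
    refine Prod.ext (funext fun s => ?_) (funext fun i => ?_) <;>
      simp only [RingHom.id_apply, Prod.smul_fst, Prod.smul_snd, Pi.smul_apply, smul_eq_mul]
    · by_cases h1 : m - 1 + (s : ℕ) < m + r - 1 <;> by_cases h2 : (s : ℕ) < k + 1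
      · simp only [dif_pos h1, dif_pos h2, Pi.smul_apply, smul_eq_mul]; ring
      · simp only [dif_pos h1, dif_neg h2, Pi.smul_apply, smul_eq_mul]; ring
      · simp only [dif_neg h1, dif_pos h2, Pi.smul_apply, smul_eq_mul]; ring
      · simp only [dif_neg h1, dif_neg h2, Pi.smul_apply, smul_eq_mul]; ring

/-- For `m ≥ 1` and `r > k ≥ 0` there is a short exact sequence in `S`:
`0 → P_0^m → P_0^{m+r-1} ⊕ P_1^{k+1} → P_1^r ⊕ P_0^k → 0`
(`P_0^0` is the zero object when `k = 0`). -/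
theorem ses_E1 (K : Type) [Field K] (m r k : ℕ) (hm : 1 ≤ m) (hrk : k < r) :
    IsExt K
      -- X = P_0^m = (0, N_(m), 0)
      (sh K 0) (sh K m) (0 : (Fin 0 → K) →ₗ[K] (Fin m → K))
      -- Z = P_0^{m+r-1} ⊕ P_1^{k+1}
      (LinearMap.prodMap (sh K 0) (sh K 1))
      (LinearMap.prodMap (sh K (m + r - 1)) (sh K (k + 1)))
      (LinearMap.prodMap (0 : (Fin 0 → K) →ₗ[K] (Fin (m + r - 1) → K)) (iota K (k + 1)))
      -- Y = P_1^r ⊕ P_0^k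
      (LinearMap.prodMap (sh K 1) (sh K 0))
      (LinearMap.prodMap (sh K r) (sh K k))
      (LinearMap.prodMap (iota K r) (0 : (Fin 0 → K) →ₗ[K] (Fin k → K))) := by
  have sh1 : sh K 1 = 0 := by
    refine LinearMap.ext fun v => funext fun j => ?_
    simp [sh]
  have sh0 : ∀ n : ℕ, n ≤ 1 → sh K n = 0 := by
    intro n hn
    refine LinearMap.ext fun v => funext fun j => ?_
    have := j.isLt
    simp only [sh, LinearMap.coe_mk, AddHom.coe_mk]
    rw [dif_neg (by omega)]
    rfl
  refine ⟨LinearMap.inl K _ _, U2 K m (m + r - 1) (k + 1),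
    LinearMap.prod (LinearMap.snd K (Fin 0 → K) (Fin 1 → K)) 0, P2 K m r k,
    ?_, ?_, ?_, ?_, ?_, ?_, ?_, ?_, ?_, ?_, ?_, ?_⟩
  · -- u₁ ∘ sh0 = (sh0 × sh1) ∘ u₁
    rw [sh1, sh0 0 (by omega)]
    refine LinearMap.ext fun v => ?_
    simp
  · -- u₂ ∘ sh m = (sh (m+r-1) × sh (k+1)) ∘ u₂
    refine LinearMap.ext fun v => Prod.ext (funext fun i => ?_) (funext fun i => ?_) <;>
      have hi := i.isLt
    · simp only [LinearMap.comp_apply, LinearMap.prodMap_apply, U2, sh,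
        LinearMap.coe_mk, AddHom.coe_mk, Prod.map_fst]
      split_ifs <;> first | rfl | omega
    · simp only [LinearMap.comp_apply, LinearMap.prodMap_apply, U2, sh,
        LinearMap.coe_mk, AddHom.coe_mk, Prod.map_snd]
      split_ifs <;>
        first
          | rfl | omega
          | exact absurd (And.left ‹False ∧ m - 1 < m›) not_false
          | (simp; done)
  · -- fZ ∘ u₁ = u₂ ∘ 0
    refine LinearMap.ext fun v => ?_
    simp
  · -- p₁ commutes
    rw [sh1, sh0 0 (by omega)]
    refine LinearMap.ext fun v => ?_
    simp
  · -- P2 commutes with shifts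
    refine LinearMap.ext fun zw => Prod.ext (funext fun s => ?_) (funext fun i => ?_)
    · have hs := s.isLt
      simp only [LinearMap.comp_apply, LinearMap.prodMap_apply, P2, sh,
        LinearMap.coe_mk, AddHom.coe_mk]
      split_ifs <;> first | rfl | omega | simp | simp_all | (exfalso; omega)
    · have hi := i.isLt
      simp only [LinearMap.comp_apply, LinearMap.prodMap_apply, P2, sh,
        LinearMap.coe_mk, AddHom.coe_mk]
      split_ifs <;> first | rfl | omega | simp | simp_all | (exfalso; omega)
  · -- fY ∘ p₁ = P2 ∘ fZ
    refine LinearMap.ext fun ab => Prod.ext (funext fun s => ?_) (funext fun i => ?_)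
    · have hs := s.isLt
      simp only [LinearMap.comp_apply, LinearMap.prodMap_apply, LinearMap.prod_apply,
        LinearMap.snd_apply, LinearMap.zero_apply, P2, iota,
        LinearMap.coe_mk, AddHom.coe_mk, Pi.zero_apply, Pi.prod]
      split_ifs <;> first | rfl | omega | simp | simp_all | (exfalso; omega)
    · have hi := i.isLt
      simp only [LinearMap.comp_apply, LinearMap.prodMap_apply, LinearMap.prod_apply,
        LinearMap.snd_apply, LinearMap.zero_apply, P2, iota,
        LinearMap.coe_mk, AddHom.coe_mk, Pi.zero_apply, Pi.prod]
      split_ifs <;> first | rfl | omega | simp | simp_all | (exfalso; omega)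
  · -- u₁ injective
    exact fun a b _ => Subsingleton.elim a b
  · -- u₂ injective
    intro v w h
    funext j
    have hj := j.isLt
    have h1 := congrFun (congrArg Prod.fst h) (Fin.castLE (by omega) j)
    simpa [U2, j.isLt] using h1
  · -- p₁ surjective
    rintro ⟨c, d⟩
    exact ⟨(0, c), Prod.ext rfl (Subsingleton.elim _ _)⟩
  · -- P2 surjective
    rintro ⟨x, y⟩
    refine ⟨(fun j => if h : m - 1 ≤ (j : ℕ) ∧ (j : ℕ) - (m - 1) < r then
        x ⟨(j : ℕ) - (m - 1), h.2⟩ -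
          (if h2 : (j : ℕ) - (m - 1) < k + 1 then
            (if h3 : (j : ℕ) - (m - 1) = 0 then 0 else
              y ⟨(j : ℕ) - (m - 1) - 1, by omega⟩) else 0)
      else 0,
      fun i => if h3 : (i : ℕ) = 0 then 0 else y ⟨(i : ℕ) - 1, by have := i.isLt; omega⟩),
      ?_⟩
    refine Prod.ext (funext fun s => ?_) (funext fun i => ?_)
    · have hs := s.isLt
      simp only [P2, LinearMap.coe_mk, AddHom.coe_mk]
      rw [dif_pos (by omega : m - 1 + (s : ℕ) < m + r - 1)]
      rw [dif_pos (by omega : m - 1 ≤ m - 1 + (s : ℕ) ∧ m - 1 + (s : ℕ) - (m - 1) < r)]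
      have hc : m - 1 + (s : ℕ) - (m - 1) = (s : ℕ) := by omega
      by_cases hk : (s : ℕ) < k + 1
      · by_cases h0 : (s : ℕ) = 0 <;>
          simp [hc, hk, h0, Fin.eta] <;>
          exact congrArg x (Fin.ext (by simp [h0]))
      · simp [hc, hk, Fin.eta] <;>
          exact congrArg x (Fin.ext (by simp))
    · have hi := i.isLt
      simp only [P2, LinearMap.coe_mk, AddHom.coe_mk]
      rw [dif_neg (by omega : ¬ ((i : ℕ) + 1 = 0))]
      simp
  · -- range u₁ = ker p₁
    ext ab
    simp only [LinearMap.mem_range, LinearMap.mem_ker, LinearMap.prod_apply,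
      LinearMap.coe_inl, LinearMap.snd_apply, LinearMap.zero_apply, Function.prod,
      Prod.ext_iff, Prod.fst_zero, Prod.snd_zero]
    constructor
    · rintro ⟨v, hv, hb⟩
      exact ⟨hb.symm, trivial⟩
    · rintro ⟨hb, -⟩
      exact ⟨ab.1, rfl, hb.symm⟩
  · -- range u₂ = ker P2
    ext zw
    simp only [LinearMap.mem_range, LinearMap.mem_ker]
    constructor
    · rintro ⟨v, rfl⟩
      refine Prod.ext (funext fun s => ?_) (funext fun i => ?_)
      · have hs := s.isLt
        simp only [P2, U2, LinearMap.coe_mk, AddHom.coe_mk]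
        rw [dif_pos (by omega : m - 1 + (s : ℕ) < m + r - 1)]
        by_cases h0 : (s : ℕ) = 0
        · rw [dif_pos (by omega : m - 1 + (s : ℕ) < m),
            dif_pos (by omega : (s : ℕ) < k + 1),
            dif_pos (⟨h0, by omega⟩ : (s : ℕ) = 0 ∧ m - 1 < m)]
          have hc : m - 1 + (s : ℕ) = m - 1 := by omega
          simp only [Prod.fst_zero, Pi.zero_apply]
          rw [show (⟨m - 1 + (s : ℕ), by omega⟩ : Fin m) = ⟨m - 1, by omega⟩ by
            exact Fin.ext hc]
          ring
        · rw [dif_neg (by omega : ¬ (m - 1 + (s : ℕ) < m))]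
          simp only [Prod.fst_zero, Pi.zero_apply, zero_add]
          split_ifs with h1 h2
          · exfalso; omega
          · rfl
          · rfl
      · simp only [P2, U2, LinearMap.coe_mk, AddHom.coe_mk]
        rw [dif_neg (by omega : ¬ ((i : ℕ) + 1 = 0 ∧ m - 1 < m))]
        simp
    · intro h
      have hx : ∀ s : Fin r, (zw.1 ⟨m - 1 + (s : ℕ), by have := s.isLt; omega⟩
          + if h2 : (s : ℕ) < k + 1 then zw.2 ⟨s, h2⟩ else 0) = 0 := by
        intro s
        have h1 := congrFun (congrArg Prod.fst h) s
        simp only [P2, LinearMap.coe_mk, AddHom.coe_mk, Prod.fst_zero, Pi.zero_apply] at h1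
        rw [dif_pos (by have := s.isLt; omega : m - 1 + (s : ℕ) < m + r - 1)] at h1
        exact h1
      have hy : ∀ i : Fin k, zw.2 ⟨(i : ℕ) + 1, by have := i.isLt; omega⟩ = 0 := by
        intro i
        have h2 := congrFun (congrArg Prod.snd h) i
        simpa [P2] using h2
      have hw : ∀ i : Fin (k + 1), (i : ℕ) ≠ 0 → zw.2 i = 0 := by
        intro i hi0
        have hik := i.isLt
        have := hy ⟨(i : ℕ) - 1, by omega⟩
        rw [show (⟨((⟨(i : ℕ) - 1, by omega⟩ : Fin k) : ℕ) + 1, by omega⟩ : Fin (k + 1)) = i by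
          exact Fin.ext (by simp; omega)] at this
        exact this
      have hz : ∀ j : Fin (m + r - 1), m ≤ (j : ℕ) → zw.1 j = 0 := by
        intro j hjm
        have hjl := j.isLt
        have hx' := hx ⟨(j : ℕ) - (m - 1), by omega⟩
        have hc : m - 1 + ((j : ℕ) - (m - 1)) = (j : ℕ) := by omega
        rw [show (⟨m - 1 + ((⟨(j : ℕ) - (m - 1), by omega⟩ : Fin r) : ℕ),
              by show m - 1 + ((j : ℕ) - (m - 1)) < m + r - 1; omega⟩
            : Fin (m + r - 1)) = j by exact Fin.ext (by simpa using hc)] at hx'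
        rcases Nat.lt_or_ge ((j : ℕ) - (m - 1)) (k + 1) with hlt | hge
        · rw [dif_pos hlt] at hx'
          have := hw ⟨(j : ℕ) - (m - 1), by omega⟩ (by simp; omega)
          rw [this, add_zero] at hx'
          exact hx'
        · rw [dif_neg (show ¬ ((⟨(j : ℕ) - (m - 1), by omega⟩ : Fin r) : ℕ) < k + 1 by
            show ¬ ((j : ℕ) - (m - 1) < k + 1); omega)] at hx'
          rw [add_zero] at hx'
          exact hx'
      refine ⟨fun j => zw.1 ⟨(j : ℕ), by have := j.isLt; omega⟩, ?_⟩
      refine Prod.ext (funext fun j => ?_) (funext fun i => ?_)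
      · have hjl := j.isLt
        simp only [U2, LinearMap.coe_mk, AddHom.coe_mk]
        split_ifs with hjm
        · exact congrArg zw.1 (Fin.ext rfl)
        · exact (hz j (by omega)).symm
      · have hil := i.isLt
        simp only [U2, LinearMap.coe_mk, AddHom.coe_mk]
        split_ifs with hi0
        · have hx0 := hx ⟨0, by omega⟩
          rw [dif_pos (show ((⟨0, by omega⟩ : Fin r) : ℕ) < k + 1 by
            show (0 : ℕ) < k + 1; omega)] at hx0
          have : zw.2 ⟨((⟨0, by omega⟩ : Fin r) : ℕ), by show (0 : ℕ) < k + 1; omega⟩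
              = zw.2 i := by
            exact congrArg zw.2 (Fin.ext (by simpa using hi0.1.symm))
          rw [this] at hx0
          have hm1 : zw.1 ⟨m - 1 + ((⟨0, by omega⟩ : Fin r) : ℕ), by omega⟩
              = zw.1 ⟨m - 1, by omega⟩ := congrArg zw.1 (Fin.ext (by simp))
          rw [hm1] at hx0
          exact neg_eq_of_add_eq_zero_right hx0
        · exact (hw i (by omega)).symm


end LRGE
end

section
/- Let K be a field and let m, r, k be natural numbers with m ≥ 1 and r > k ≥ 0. There exists a short exact sequence in the category S: 0 → P_1^m → P_1^{m+r−1} ⊕ P_1^{k+1} → P_1^r ⊕ P_0^k → 0 (where P_0^0 denotes the zero object when k = 0); that is, there are morphisms u : P_1^m → P_1^{m+r−1} ⊕ P_1^{k+1} and p : P_1^{m+r−1} ⊕ P_1^{k+1} → P_1^r ⊕ P_0^k whose component sequences on both coordinates are short exact sequences of K[T]-modules. -/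
open Module

namespace LRGE

variable (K : Type) [Field K]

def inc (a b : ℕ) : (Fin a → K) →ₗ[K] (Fin b → K) where
  toFun v := fun j => if h : (j : ℕ) < a then v ⟨(j : ℕ), h⟩ else 0
  map_add' u v := by funext j; by_cases h : (j : ℕ) < a <;> simp [h]
  map_smul' c v := by funext j; by_cases h : (j : ℕ) < a <;> simp [h]

def quo (a b : ℕ) : (Fin a → K) →ₗ[K] (Fin b → K) where
  toFun v := fun j => if h : (j : ℕ) + (a - b) < a then v ⟨(j : ℕ) + (a - b), h⟩ else 0
  map_add' u v := by funext j; by_cases h : (j : ℕ) + (a - b) < a <;> simp [h]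
  map_smul' c v := by funext j; by_cases h : (j : ℕ) + (a - b) < a <;> simp [h]

def soc (a b : ℕ) : (Fin a → K) →ₗ[K] (Fin b → K) where
  toFun v := fun j => if h : (j : ℕ) = 0 ∧ 0 < a then v ⟨a - 1, by omega⟩ else 0
  map_add' u v := by funext j; by_cases h : (j : ℕ) = 0 ∧ 0 < a <;> simp [h]
  map_smul' c v := by funext j; by_cases h : (j : ℕ) = 0 ∧ 0 < a <;> simp [h]

lemma sh_one_eq_zero : sh K 1 = 0 := by
  refine LinearMap.ext fun v => funext fun j => ?_
  simp [sh]

lemma inc_comm {a b : ℕ} (h : a ≤ b) :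
    sh K b ∘ₗ inc K a b = inc K a b ∘ₗ sh K a := by
  refine LinearMap.ext fun v => funext fun j => ?_
  simp only [LinearMap.comp_apply, sh, inc, LinearMap.coe_mk, AddHom.coe_mk]
  split_ifs <;>
    first
      | rfl
      | omega
      | (exfalso; omega)
      | (exact (‹False ∧ _›.1).elim)
      | (simp_all; done)
      | (congr 1; first | omega | (simp only [Fin.mk.injEq]; omega))

lemma quo_comm {a b : ℕ} (h : b ≤ a) :
    sh K b ∘ₗ quo K a b = quo K a b ∘ₗ sh K a := by
  refine LinearMap.ext fun v => funext fun j => ?_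
  simp only [LinearMap.comp_apply, sh, quo, LinearMap.coe_mk, AddHom.coe_mk]
  split_ifs <;>
    first
      | rfl
      | omega
      | (exfalso; omega)
      | (exact (‹False ∧ _›.1).elim)
      | (simp_all; done)
      | (congr 1; first | omega | (simp only [Fin.mk.injEq]; omega))

lemma soc_comm (a b : ℕ) :
    sh K b ∘ₗ soc K a b = soc K a b ∘ₗ sh K a := by
  refine LinearMap.ext fun v => funext fun j => ?_
  simp only [LinearMap.comp_apply, sh, soc, LinearMap.coe_mk, AddHom.coe_mk]
  split_ifs <;>
    first
      | rfl
      | omega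
      | (exfalso; omega)
      | (exact (‹False ∧ _›.1).elim)
      | (simp_all; done)
      | (congr 1; first | omega | (simp only [Fin.mk.injEq]; omega))

lemma inc_iota {m b : ℕ} (hm : 1 ≤ m) :
    inc K m b ∘ₗ iota K m = iota K b := by
  refine LinearMap.ext fun v => funext fun j => ?_
  simp only [LinearMap.comp_apply, inc, iota, LinearMap.coe_mk, AddHom.coe_mk]
  split_ifs <;> first | rfl | omega | (exfalso; omega) | (exact (‹False ∧ _›.1).elim) | (simp_all; done)

lemma soc_iota (m b : ℕ) :
    soc K m b ∘ₗ iota K m = (if m = 1 then (1 : K) else 0) • iota K b := by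
  refine LinearMap.ext fun v => funext fun j => ?_
  simp only [LinearMap.comp_apply, soc, iota, LinearMap.coe_mk, AddHom.coe_mk,
    LinearMap.smul_apply, Pi.smul_apply, smul_eq_mul]
  split_ifs <;> first | rfl | omega | (exfalso; omega) | (exact (‹False ∧ _›.1).elim) | (simp_all; done) | (simp; done)

lemma quo_iota (a b : ℕ) (hab : b + 1 ≤ a) :
    quo K a b ∘ₗ iota K a = 0 := by
  refine LinearMap.ext fun v => funext fun j => ?_
  simp only [LinearMap.comp_apply, quo, iota, LinearMap.coe_mk, AddHom.coe_mk,
    LinearMap.zero_apply, Pi.zero_apply]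
  split_ifs <;> first | rfl | omega | (exfalso; omega) | (exact (‹False ∧ _›.1).elim) | (simp_all; done)

lemma quo_soc (m k : ℕ) : quo K (k+1) k ∘ₗ soc K m (k+1) = 0 := by
  refine LinearMap.ext fun v => funext fun j => ?_
  simp only [LinearMap.comp_apply, quo, soc, LinearMap.coe_mk, AddHom.coe_mk,
    LinearMap.zero_apply, Pi.zero_apply]
  split_ifs <;> first | rfl | omega | (exfalso; omega) | (exact (‹False ∧ _›.1).elim) | (simp_all; done)

lemma quo_inc (m r k : ℕ) (hm : 1 ≤ m) (hrk : k < r) :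
    quo K (m + r - 1) r ∘ₗ inc K m (m + r - 1) = inc K (k+1) r ∘ₗ soc K m (k+1) := by
  refine LinearMap.ext fun v => funext fun j => ?_
  simp only [LinearMap.comp_apply, quo, inc, soc, LinearMap.coe_mk, AddHom.coe_mk]
  split_ifs <;>
    first
      | rfl
      | omega
      | (exfalso; omega)
      | (exact (‹False ∧ _›.1).elim)
      | (simp_all; done)
      | (congr 1; first | omega | (simp only [Fin.mk.injEq]; omega))

lemma quo_iota_dr (m r : ℕ) (hm : 1 ≤ m) (hr : 1 ≤ r) :
    quo K (m + r - 1) r ∘ₗ iota K (m + r - 1) = (if m = 1 then (1 : K) else 0) • iota K r := by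
  refine LinearMap.ext fun v => funext fun j => ?_
  simp only [LinearMap.comp_apply, quo, iota, LinearMap.coe_mk, AddHom.coe_mk,
    LinearMap.smul_apply, Pi.smul_apply, smul_eq_mul]
  split_ifs <;> first | rfl | omega | (exfalso; omega) | (exact (‹False ∧ _›.1).elim) | (simp_all; done) | (simp; done)


def sec (a b : ℕ) : (Fin b → K) →ₗ[K] (Fin a → K) where
  toFun v := fun i => if h : a ≤ (i : ℕ) + b then v ⟨(i : ℕ) - (a - b), by omega⟩ else 0
  map_add' u v := by funext i; split_ifs with h <;> simp [h]
  map_smul' c v := by funext i; split_ifs with h <;> simp [h]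

lemma quo_sec {a b : ℕ} (h : b ≤ a) :
    quo K a b ∘ₗ sec K a b = LinearMap.id := by
  refine LinearMap.ext fun v => funext fun j => ?_
  simp only [LinearMap.comp_apply, quo, sec, LinearMap.coe_mk, AddHom.coe_mk, LinearMap.id_apply]
  split_ifs <;>
    first
      | rfl
      | omega
      | (exfalso; omega)
      | (simp only [Nat.add_sub_cancel, Fin.eta])



/-- For `m ≥ 1` and `r > k ≥ 0` there is a short exact sequence in `S`:
`0 → P_1^m → P_1^{m+r-1} ⊕ P_1^{k+1} → P_1^r ⊕ P_0^k → 0`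
(`P_0^0` is the zero object when `k = 0`). -/
theorem ses_E2 (K : Type) [Field K] (m r k : ℕ) (hm : 1 ≤ m) (hrk : k < r) :
    IsExt K
      -- X = P_1^m = (N_(1), N_(m), ι)
      (sh K 1) (sh K m) (iota K m)
      -- Z = P_1^{m+r-1} ⊕ P_1^{k+1}
      (LinearMap.prodMap (sh K 1) (sh K 1))
      (LinearMap.prodMap (sh K (m + r - 1)) (sh K (k + 1)))
      (LinearMap.prodMap (iota K (m + r - 1)) (iota K (k + 1)))
      -- Y = P_1^r ⊕ P_0^k
      (LinearMap.prodMap (sh K 1) (sh K 0))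
      (LinearMap.prodMap (sh K r) (sh K k))
      (LinearMap.prodMap (iota K r) (0 : (Fin 0 → K) →ₗ[K] (Fin k → K))) := by
  refine ⟨LinearMap.prod LinearMap.id (-((if m = 1 then (1:K) else 0) • LinearMap.id)),
    LinearMap.prod (inc K m (m + r - 1)) (-(soc K m (k + 1))),
    LinearMap.prod
      ((if m = 1 then (1:K) else 0) • LinearMap.fst K (Fin 1 → K) (Fin 1 → K)
        + LinearMap.snd K (Fin 1 → K) (Fin 1 → K))
      (0 : ((Fin 1 → K) × (Fin 1 → K)) →ₗ[K] (Fin 0 → K)),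
    LinearMap.prod
      ((quo K (m + r - 1) r).coprod (inc K (k + 1) r))
      ((0 : (Fin (m + r - 1) → K) →ₗ[K] (Fin k → K)).coprod (quo K (k + 1) k)),
    ?_, ?_, ?_, ?_, ?_, ?_, ?_, ?_, ?_, ?_, ?_, ?_⟩
  -- 1 : u₁ equivariance
  · rw [sh_one_eq_zero]
    refine LinearMap.ext fun t => ?_
    simp
  -- 2 : u₂ equivariance
  · refine LinearMap.ext fun v => ?_
    have h1 := LinearMap.congr_fun (inc_comm K (show m ≤ m + r - 1 by omega)) v
    have h2 := LinearMap.congr_fun (soc_comm K m (k + 1)) v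
    simp only [LinearMap.comp_apply] at h1 h2
    simp only [LinearMap.comp_apply, LinearMap.prod_apply, Function.prod,
      LinearMap.prodMap_apply, LinearMap.neg_apply, Prod.mk.injEq, map_neg]
    exact ⟨h1.symm, by rw [h2]⟩
  -- 3 : fZ ∘ u₁ = u₂ ∘ fX
  · refine LinearMap.ext fun t => ?_
    have h1 := LinearMap.congr_fun (inc_iota K (b := m + r - 1) hm) t
    have h2 := LinearMap.congr_fun (soc_iota K m (k + 1)) t
    simp only [LinearMap.comp_apply, LinearMap.smul_apply] at h1 h2
    simp only [LinearMap.comp_apply, LinearMap.prod_apply, Function.prod,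
      LinearMap.prodMap_apply, LinearMap.neg_apply, LinearMap.smul_apply,
      LinearMap.id_apply, Prod.mk.injEq, map_neg, map_smul]
    exact ⟨h1.symm, by rw [h2]⟩
  -- 4 : p₁ equivariance
  · refine LinearMap.ext fun x => Prod.ext ?_ (funext fun j => j.elim0)
    simp [sh_one_eq_zero]
  -- 5 : p₂ equivariance
  · refine LinearMap.ext fun x => ?_
    have h1 := LinearMap.congr_fun (quo_comm K (show r ≤ m + r - 1 by omega)) x.1
    have h2 := LinearMap.congr_fun (inc_comm K (show k + 1 ≤ r by omega)) x.2
    have h3 := LinearMap.congr_fun (quo_comm K (show k ≤ k + 1 by omega)) x.2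
    simp only [LinearMap.comp_apply] at h1 h2 h3
    simp only [LinearMap.comp_apply, LinearMap.prod_apply, Function.prod,
      LinearMap.prodMap_apply, LinearMap.coprod_apply, LinearMap.zero_apply,
      Prod.mk.injEq, map_add, zero_add]
    exact ⟨by rw [h1, h2], by rw [h3]⟩
  -- 6 : fY ∘ p₁ = p₂ ∘ fZ
  · refine LinearMap.ext fun x => ?_
    have h1 := LinearMap.congr_fun (quo_iota_dr K m r hm (by omega)) x.1
    have h2 := LinearMap.congr_fun (inc_iota K (m := k + 1) (b := r) (by omega)) x.2
    have h3 := LinearMap.congr_fun (quo_iota K (k + 1) k (by omega)) x.2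
    simp only [LinearMap.comp_apply, LinearMap.smul_apply] at h1 h2 h3
    simp only [LinearMap.comp_apply, LinearMap.prod_apply, Function.prod,
      LinearMap.prodMap_apply, LinearMap.coprod_apply, LinearMap.zero_apply,
      LinearMap.add_apply, LinearMap.smul_apply, LinearMap.fst_apply,
      LinearMap.snd_apply, Prod.mk.injEq, map_add, map_smul, zero_add]
    exact ⟨by rw [h1, h2], by simp [h3]⟩
  -- 7 : u₁ injective
  · intro t t' h
    simpa using congrArg Prod.fst h
  -- 8 : u₂ injective
  · intro v v' h
    have h1 : inc K m (m + r - 1) v = inc K m (m + r - 1) v' := by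
      simpa using congrArg Prod.fst h
    funext j
    have hj := congrFun h1 ⟨(j : ℕ), by omega⟩
    simpa [inc, j.isLt] using hj
  -- 9 : p₁ surjective
  · intro y
    refine ⟨(0, y.1), Prod.ext ?_ (funext fun j => j.elim0)⟩
    simp only [LinearMap.prod_apply, Function.prod, LinearMap.add_apply,
      LinearMap.smul_apply, LinearMap.fst_apply, LinearMap.snd_apply]
    by_cases hm1 : m = 1 <;> simp [hm1]
  -- 10 : p₂ surjective
  · intro y
    refine ⟨(sec K (m + r - 1) r (y.1 - inc K (k + 1) r (sec K (k + 1) k y.2)),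
      sec K (k + 1) k y.2), Prod.ext ?_ ?_⟩
    · have h1 := LinearMap.congr_fun (quo_sec K (show r ≤ m + r - 1 by omega))
        (y.1 - inc K (k + 1) r (sec K (k + 1) k y.2))
      simp only [LinearMap.comp_apply, LinearMap.id_apply] at h1
      simp only [LinearMap.prod_apply, Function.prod, LinearMap.coprod_apply, h1]
      abel
    · have h2 := LinearMap.congr_fun (quo_sec K (show k ≤ k + 1 by omega)) y.2
      simp only [LinearMap.comp_apply, LinearMap.id_apply] at h2
      simp only [LinearMap.prod_apply, Function.prod, LinearMap.coprod_apply,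
        LinearMap.zero_apply, zero_add, h2]
  -- 11 : range u₁ = ker p₁
  · apply Submodule.eq_of_le_of_finrank_le
    · rintro x ⟨t, rfl⟩
      simp only [LinearMap.mem_ker, LinearMap.prod_apply, Function.prod,
        LinearMap.add_apply, LinearMap.smul_apply, LinearMap.fst_apply,
        LinearMap.snd_apply, LinearMap.neg_apply, LinearMap.id_apply,
        LinearMap.zero_apply, Prod.mk_eq_zero]
      refine ⟨by abel, ?_⟩
      first | trivial | rfl
    · have hinj : Function.Injective
          (LinearMap.prod LinearMap.id (-((if m = 1 then (1:K) else 0) • LinearMap.id)) :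
            (Fin 1 → K) →ₗ[K] (Fin 1 → K) × (Fin 1 → K)) := by
        intro t t' h
        simpa using congrArg Prod.fst h
      have hsurj : Function.Surjective
          (LinearMap.prod
            ((if m = 1 then (1:K) else 0) • LinearMap.fst K (Fin 1 → K) (Fin 1 → K)
              + LinearMap.snd K (Fin 1 → K) (Fin 1 → K))
            (0 : ((Fin 1 → K) × (Fin 1 → K)) →ₗ[K] (Fin 0 → K))) := by
        intro y
        refine ⟨(0, y.1), Prod.ext ?_ (funext fun j => j.elim0)⟩
        simp only [LinearMap.prod_apply, Function.prod, LinearMap.add_apply,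
          LinearMap.smul_apply, LinearMap.fst_apply, LinearMap.snd_apply]
        by_cases hm1 : m = 1 <;> simp [hm1]
      rw [LinearMap.finrank_range_of_inj hinj]
      have hrn := LinearMap.finrank_range_add_finrank_ker
        (LinearMap.prod
          ((if m = 1 then (1:K) else 0) • LinearMap.fst K (Fin 1 → K) (Fin 1 → K)
            + LinearMap.snd K (Fin 1 → K) (Fin 1 → K))
          (0 : ((Fin 1 → K) × (Fin 1 → K)) →ₗ[K] (Fin 0 → K)))
      rw [LinearMap.range_eq_top.2 hsurj, finrank_top] at hrn
      simp only [Module.finrank_prod, Module.finrank_fin_fun] at hrn ⊢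
      omega
  -- 12 : range u₂ = ker p₂
  · apply Submodule.eq_of_le_of_finrank_le
    · rintro x ⟨v, rfl⟩
      have h1 := LinearMap.congr_fun (quo_inc K m r k hm hrk) v
      have h2 := LinearMap.congr_fun (quo_soc K m k) v
      simp only [LinearMap.comp_apply, LinearMap.zero_apply] at h1 h2
      simp only [LinearMap.mem_ker, LinearMap.prod_apply, Function.prod,
        LinearMap.coprod_apply, LinearMap.neg_apply, LinearMap.zero_apply,
        Prod.mk_eq_zero, map_neg, h1, h2, zero_add, neg_zero, and_true]
      abel
    · have hinj : Function.Injective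
          (LinearMap.prod (inc K m (m + r - 1)) (-(soc K m (k + 1))) :
            (Fin m → K) →ₗ[K] (Fin (m + r - 1) → K) × (Fin (k + 1) → K)) := by
        intro v v' h
        have h1 : inc K m (m + r - 1) v = inc K m (m + r - 1) v' := by
          simpa using congrArg Prod.fst h
        funext j
        have hj := congrFun h1 ⟨(j : ℕ), by omega⟩
        simpa [inc, j.isLt] using hj
      have hsurj : Function.Surjective
          (LinearMap.prod
            ((quo K (m + r - 1) r).coprod (inc K (k + 1) r))
            ((0 : (Fin (m + r - 1) → K) →ₗ[K] (Fin k → K)).coprod (quo K (k + 1) k))) := by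
        intro y
        refine ⟨(sec K (m + r - 1) r (y.1 - inc K (k + 1) r (sec K (k + 1) k y.2)),
          sec K (k + 1) k y.2), Prod.ext ?_ ?_⟩
        · have h1 := LinearMap.congr_fun (quo_sec K (show r ≤ m + r - 1 by omega))
            (y.1 - inc K (k + 1) r (sec K (k + 1) k y.2))
          simp only [LinearMap.comp_apply, LinearMap.id_apply] at h1
          simp only [LinearMap.prod_apply, Function.prod, LinearMap.coprod_apply, h1]
          abel
        · have h2 := LinearMap.congr_fun (quo_sec K (show k ≤ k + 1 by omega)) y.2
          simp only [LinearMap.comp_apply, LinearMap.id_apply] at h2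
          simp only [LinearMap.prod_apply, Function.prod, LinearMap.coprod_apply,
            LinearMap.zero_apply, zero_add, h2]
      rw [LinearMap.finrank_range_of_inj hinj]
      have hrn := LinearMap.finrank_range_add_finrank_ker
        (LinearMap.prod
          ((quo K (m + r - 1) r).coprod (inc K (k + 1) r))
          ((0 : (Fin (m + r - 1) → K) →ₗ[K] (Fin k → K)).coprod (quo K (k + 1) k)))
      rw [LinearMap.range_eq_top.2 hsurj, finrank_top] at hrn
      simp only [Module.finrank_prod, Module.finrank_fin_fun] at hrn ⊢
      omega

end LRGE
end

section
/- Let K be a field and let ν, σ, μ be partitions. If there exists a short exact sequence of K[T]-modules 0 → N_ν → N_σ → N_μ → 0, then for every m ≥ 1 one has Σ_{i=1}^m σ_i ≤ Σ_{i=1}^m (ν_i + μ_i). -/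
open Module

namespace LRGE

variable {K : Type} [Field K]

/-! ### auxiliary lemmas -/


section GenLA

variable {V V₂ : Type*} [AddCommGroup V] [Module K V] [AddCommGroup V₂] [Module K V₂]

lemma finrank_sup_le' [FiniteDimensional K V] (s t : Submodule K V) :
    finrank K ↥(s ⊔ t) ≤ finrank K s + finrank K t := by
  have h := Submodule.finrank_sup_add_finrank_inf_eq s t
  omega

lemma finrank_span_range_le [FiniteDimensional K V] {m : ℕ} (w : Fin m → V) :
    finrank K ↥(Submodule.span K (Set.range w)) ≤ m := by
  rw [← Fintype.range_linearCombination K w]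
  have := LinearMap.finrank_range_le (Fintype.linearCombination K w)
  simpa using this

lemma finrank_map_add_inf_ker [FiniteDimensional K V] (f : V →ₗ[K] V₂) (W : Submodule K V) :
    finrank K ↥(W.map f) + finrank K ↥(LinearMap.ker f ⊓ W) = finrank K ↥W := by
  have h := LinearMap.finrank_range_add_finrank_ker (f.domRestrict W)
  rw [LinearMap.range_domRestrict, LinearMap.ker_domRestrict] at h
  have h2 : Submodule.comap W.subtype (LinearMap.ker f)
      = Submodule.comap W.subtype (LinearMap.ker f ⊓ W) := by
    rw [Submodule.comap_inf]
    rw [Submodule.comap_subtype_self, inf_top_eq]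
  rw [h2] at h
  rw [(Submodule.comapSubtypeEquivOfLe (inf_le_right :
    LinearMap.ker f ⊓ W ≤ W)).finrank_eq] at h
  exact h

lemma finrank_eq_sum_ker_inf [FiniteDimensional K V] (φ : V →ₗ[K] V) (W : Submodule K V)
    (L : ℕ) (hL : W.map (φ ^ L) = ⊥) :
    finrank K ↥W =
      ∑ k ∈ Finset.range L, finrank K ↥(LinearMap.ker φ ⊓ W.map (φ ^ k)) := by
  have key : ∀ L : ℕ, finrank K ↥W = finrank K ↥(W.map (φ ^ L)) +
      ∑ k ∈ Finset.range L, finrank K ↥(LinearMap.ker φ ⊓ W.map (φ ^ k)) := by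
    intro L
    induction L with
    | zero =>
        rw [pow_zero, Module.End.one_eq_id, Submodule.map_id]
        simp
    | succ n ih =>
      rw [ih, Finset.sum_range_succ]
      have hcomp : W.map (φ ^ (n + 1)) = (W.map (φ ^ n)).map φ := by
        rw [pow_succ']
        rw [Module.End.mul_eq_comp, Submodule.map_comp]
      have := finrank_map_add_inf_ker φ (W.map (φ ^ n))
      rw [hcomp]
      omega
  rw [key L, hL]
  simp

lemma finrank_map_pow_le [FiniteDimensional K V] (φ : V →ₗ[K] V) (W : Submodule K V)
    {m : ℕ} (w : Fin m → V)
    (hgen : W ≤ W.map φ ⊔ Submodule.span K (Set.range w)) (k : ℕ) :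
    finrank K ↥(W.map (φ ^ k)) ≤ finrank K ↥(W.map (φ ^ (k + 1))) + m := by
  have h1 : W.map (φ ^ k) ≤ W.map (φ ^ (k + 1)) ⊔
      Submodule.span K (Set.range (fun i => (φ ^ k) (w i))) := by
    calc W.map (φ ^ k) ≤ (W.map φ ⊔ Submodule.span K (Set.range w)).map (φ ^ k) :=
          Submodule.map_mono hgen
    _ = (W.map φ).map (φ ^ k) ⊔ (Submodule.span K (Set.range w)).map (φ ^ k) :=
          Submodule.map_sup _ _ _
    _ = W.map (φ ^ (k + 1)) ⊔
        Submodule.span K (Set.range (fun i => (φ ^ k) (w i))) := by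
      congr 1
      · rw [pow_succ, Module.End.mul_eq_comp, Submodule.map_comp]
      · rw [Submodule.map_span, ← Set.range_comp]
        rfl
  calc finrank K ↥(W.map (φ ^ k)) ≤ finrank K ↥(W.map (φ ^ (k + 1)) ⊔
        Submodule.span K (Set.range (fun i => (φ ^ k) (w i)))) :=
      Submodule.finrank_mono h1
  _ ≤ finrank K ↥(W.map (φ ^ (k + 1))) +
      finrank K ↥(Submodule.span K (Set.range (fun i => (φ ^ k) (w i)))) :=
      finrank_sup_le' _ _
  _ ≤ finrank K ↥(W.map (φ ^ (k + 1))) + m := by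
      have := finrank_span_range_le (K := K) (fun i => (φ ^ k) (w i))
      omega

lemma finrank_ker_inf_map_pow_le [FiniteDimensional K V] (φ : V →ₗ[K] V) (W : Submodule K V)
    {m : ℕ} (w : Fin m → V)
    (hgen : W ≤ W.map φ ⊔ Submodule.span K (Set.range w)) (k : ℕ) :
    finrank K ↥(LinearMap.ker φ ⊓ W.map (φ ^ k)) ≤ m := by
  have h1 := finrank_map_add_inf_ker φ (W.map (φ ^ k))
  have hcomp : (W.map (φ ^ k)).map φ = W.map (φ ^ (k + 1)) := by
    rw [pow_succ', Module.End.mul_eq_comp, Submodule.map_comp]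
  rw [hcomp] at h1
  have h2 := finrank_map_pow_le φ W w hgen k
  omega

end GenLA

/-! ### shiftMap lemmas -/

section Shift

variable {lam : ℕ → ℕ}

lemma shiftMap_apply (v : NMod K lam) (i : ℕ) (j : Fin (lam i)) :
    shiftMap K lam v i j =
      if h : (j : ℕ) + 1 < lam i then v i ⟨(j : ℕ) + 1, h⟩ else 0 := rfl

lemma shiftMap_pow_apply (k : ℕ) (v : NMod K lam) (i : ℕ) (j : Fin (lam i)) :
    (shiftMap K lam ^ k) v i j =
      if h : (j : ℕ) + k < lam i then v i ⟨(j : ℕ) + k, h⟩ else 0 := by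
  induction k generalizing v with
  | zero =>
    rw [pow_zero]
    simp only [Module.End.one_apply, Nat.add_zero]
    rw [dif_pos j.isLt]
  | succ n ih =>
    rw [pow_succ, Module.End.mul_eq_comp, LinearMap.comp_apply]
    rw [ih (shiftMap K lam v)]
    by_cases h : (j : ℕ) + n < lam i
    · rw [dif_pos h, shiftMap_apply]
      by_cases h2 : (j : ℕ) + n + 1 < lam i
      · rw [dif_pos h2, dif_pos (by omega : (j : ℕ) + (n + 1) < lam i)]
        congr 1
      · rw [dif_neg h2, dif_neg (by omega : ¬ ((j : ℕ) + (n + 1) < lam i))]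
    · rw [dif_neg h, dif_neg (by omega : ¬ ((j : ℕ) + (n + 1) < lam i))]

lemma shiftMap_ker_apply {v : NMod K lam} (hv : shiftMap K lam v = 0) (i : ℕ)
    (j : Fin (lam i)) (hj : 1 ≤ (j : ℕ)) : v i j = 0 := by
  have h1 : (j : ℕ) - 1 < lam i := by omega
  have := congrFun (congrFun hv i) ⟨(j : ℕ) - 1, h1⟩
  rw [shiftMap_apply] at this
  rw [dif_pos (by omega : (j : ℕ) - 1 + 1 < lam i)] at this
  have hjj : (⟨(j : ℕ) - 1 + 1, by omega⟩ : Fin (lam i)) = j := by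
    apply Fin.ext; simp; omega
  rw [hjj] at this
  exact this

lemma shiftMap_pow_eq_zero (hA : Antitone lam) {L : ℕ} (hL : lam 0 ≤ L) :
    (shiftMap K lam) ^ L = 0 := by
  apply LinearMap.ext
  intro v
  funext i j
  rw [shiftMap_pow_apply]
  rw [dif_neg]
  · rfl
  · have := hA (Nat.zero_le i)
    omega

lemma NMod.finiteDimensional {N : ℕ} (hN : ∀ n, N ≤ n → lam n = 0) :
    FiniteDimensional K (NMod K lam) := by
  let f : NMod K lam →ₗ[K] (∀ i : Fin N, Fin (lam i) → K) :=
    LinearMap.pi (fun i : Fin N => LinearMap.proj (i : ℕ))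
  apply FiniteDimensional.of_injective f
  intro a b hab
  funext i j
  by_cases h : i < N
  · exact congrFun (congrFun hab ⟨i, h⟩) j
  · exfalso
    have h0 := hN i (by omega)
    exact absurd j.isLt (by omega)

lemma finrank_ker_inf_range_pow_le (hA : Antitone lam) {N : ℕ}
    (hN : ∀ n, N ≤ n → lam n = 0) [FiniteDimensional K (NMod K lam)] (k : ℕ) :
    finrank K ↥(LinearMap.ker (shiftMap K lam) ⊓ LinearMap.range (shiftMap K lam ^ k)) ≤
      ((Finset.range N).filter (fun i => k < lam i)).card := by
  classical
  set T := ((Finset.range N).filter (fun i => k < lam i)) with hT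
  have hpos : ∀ t : {x // x ∈ T}, 0 < lam (t : ℕ) := by
    intro t
    have := (Finset.mem_filter.mp t.2).2
    omega
  let F : NMod K lam →ₗ[K] ({x // x ∈ T} → K) :=
    LinearMap.pi (fun t => (LinearMap.proj (R := K) (φ := fun _ : Fin (lam (t : ℕ)) => K)
      (⟨0, hpos t⟩ : Fin (lam (t : ℕ)))).comp
      (LinearMap.proj (R := K) (φ := fun i => Fin (lam i) → K) (t : ℕ)))
  set S := LinearMap.ker (shiftMap K lam) ⊓ LinearMap.range (shiftMap K lam ^ k) with hS
  have hzero : ∀ v ∈ S, F v = 0 → v = 0 := by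
    intro v hv hFv
    obtain ⟨hker, y, hy⟩ := hv
    replace hker : shiftMap K lam v = 0 := hker
    funext i j
    show v i j = (0 : K)
    rcases Nat.eq_zero_or_pos (j : ℕ) with h0 | h1
    · have hj : j = ⟨0, by omega⟩ := Fin.ext h0
      by_cases hk : k < lam i
      · have hiN : i < N := by
          by_contra hcon
          have := hN i (by omega)
          omega
        have hmem : i ∈ T := Finset.mem_filter.mpr ⟨Finset.mem_range.mpr hiN, hk⟩
        have := congrFun hFv ⟨i, hmem⟩
        simp only [F, LinearMap.pi_apply, LinearMap.comp_apply, LinearMap.proj_apply,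
          Pi.zero_apply] at this
        rw [hj]
        exact this
      · rw [← hy, shiftMap_pow_apply]
        rw [dif_neg (by omega : ¬ ((j : ℕ) + k < lam i))]
    · exact shiftMap_ker_apply hker i j h1
  have hinj : Function.Injective (F ∘ₗ S.subtype) := by
    intro a b hab
    apply Subtype.ext
    have hmem : (a : NMod K lam) - (b : NMod K lam) ∈ S := sub_mem a.2 b.2
    have hab' : F (a : NMod K lam) = F (b : NMod K lam) := hab
    have : F ((a : NMod K lam) - (b : NMod K lam)) = 0 := by
      rw [map_sub, hab', sub_self]
    have := hzero _ hmem this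
    exact sub_eq_zero.mp this
  have hle := LinearMap.finrank_le_finrank_of_injective hinj
  calc finrank K ↥S ≤ finrank K ({x // x ∈ T} → K) := hle
  _ = T.card := by rw [Module.finrank_pi]; exact Fintype.card_coe T

end Shift

/-! ### The top-blocks submodule of `N_σ` -/

section TopW

variable (lam : ℕ → ℕ) (m : ℕ)

/-- Extension by zero of the first `m` blocks. -/
def Emap : (∀ i : Fin m, Fin (lam (i : ℕ)) → K) →ₗ[K] NMod K lam where
  toFun x := fun i => if h : i < m then x ⟨i, h⟩ else 0
  map_add' a b := by
    funext i j
    by_cases h : i < m <;> simp [h]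
  map_smul' c a := by
    funext i j
    by_cases h : i < m <;> simp [h]

lemma Emap_injective : Function.Injective (Emap (K := K) lam m) := by
  intro a b hab
  funext i j
  have := congrFun (congrFun hab (i : ℕ)) ⟨(j : ℕ), by simpa using j.isLt⟩
  simp only [Emap, LinearMap.coe_mk, AddHom.coe_mk] at this
  rw [dif_pos i.isLt, dif_pos i.isLt] at this
  simpa using this

lemma finrank_Emap_range :
    finrank K ↥(LinearMap.range (Emap (K := K) lam m)) = psum lam m := by
  rw [LinearMap.finrank_range_of_inj (Emap_injective lam m)]
  rw [Module.finrank_pi_fintype]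
  rw [psum, ← Fin.sum_univ_eq_sum_range (fun i => lam i) m]
  congr 1
  funext i
  rw [Module.finrank_pi]
  simp

/-- Cyclic generators of the top-blocks submodule. -/
def wgen : Fin m → NMod K lam :=
  fun i => fun i' j => if i' = (i : ℕ) ∧ (j : ℕ) + 1 = lam i' then 1 else 0

lemma Emap_range_gen :
    LinearMap.range (Emap (K := K) lam m) ≤
      (LinearMap.range (Emap (K := K) lam m)).map (shiftMap K lam) ⊔
        Submodule.span K (Set.range (wgen lam m)) := by
  classical
  rintro v ⟨x, rfl⟩
  have hx' : ∀ i : Fin m, ∀ j : Fin (lam (i : ℕ)), 1 ≤ (j : ℕ) → (j : ℕ) - 1 < lam (i : ℕ) := by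
    intro i j hj; omega
  set x' : ∀ i : Fin m, Fin (lam (i : ℕ)) → K :=
    fun i j => if h : 1 ≤ (j : ℕ) then x i ⟨(j : ℕ) - 1, hx' i j h⟩ else 0 with hx'def
  set c : Fin m → K :=
    fun i => if h : 0 < lam (i : ℕ) then x i ⟨lam (i : ℕ) - 1, by omega⟩ else 0 with hcdef
  apply Submodule.mem_sup.mpr
  refine ⟨shiftMap K lam (Emap lam m x'),
    Submodule.mem_map_of_mem ⟨x', rfl⟩,
    ∑ i : Fin m, c i • wgen lam m i,
    Submodule.sum_mem _ (fun i _ => Submodule.smul_mem _ _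
      (Submodule.subset_span ⟨i, rfl⟩)), ?_⟩
  funext i' j
  have hsum : (∑ i : Fin m, c i • wgen lam m i) i' j
      = ∑ i : Fin m, c i * wgen lam m i i' j := by
    rw [Finset.sum_apply, Finset.sum_apply]
    rfl
  have hadd : ((shiftMap K lam (Emap lam m x') + ∑ i : Fin m, c i • wgen lam m i
        : NMod K lam)) i' j
      = shiftMap K lam (Emap lam m x') i' j
        + (∑ i : Fin m, c i • wgen lam m i) i' j := rfl
  rw [hadd, hsum]
  by_cases him : i' < m
  · -- only the i' term contributes
    have hsum2 : ∑ i : Fin m, c i * wgen lam m i i' j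
        = c ⟨i', him⟩ * wgen lam m ⟨i', him⟩ i' j := by
      apply Fintype.sum_eq_single (⟨i', him⟩ : Fin m)
      intro b hb
      have hcond : ¬ (i' = (b : ℕ) ∧ (j : ℕ) + 1 = lam i') := by
        intro hcon
        exact hb (Fin.ext hcon.1.symm)
      simp only [wgen]
      rw [if_neg hcond, mul_zero]
    rw [hsum2]
    have hE : Emap (K := K) lam m x i' j = x ⟨i', him⟩ ⟨(j : ℕ), by simpa using j.isLt⟩ := by
      simp only [Emap, LinearMap.coe_mk, AddHom.coe_mk]
      rw [dif_pos him]
    rw [shiftMap_apply]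
    by_cases hlast : (j : ℕ) + 1 < lam i'
    · rw [dif_pos hlast]
      have hE' : Emap (K := K) lam m x' i' ⟨(j : ℕ) + 1, hlast⟩
          = x ⟨i', him⟩ ⟨(j : ℕ), by simpa using j.isLt⟩ := by
        simp only [Emap, LinearMap.coe_mk, AddHom.coe_mk]
        rw [dif_pos him]
        rw [hx'def]
        simp only []
        rw [dif_pos (by omega : 1 ≤ (j : ℕ) + 1)]
        congr 1
      rw [hE', hE]
      have hw0 : wgen (K := K) lam m ⟨i', him⟩ i' j = 0 := by
        simp only [wgen]
        rw [if_neg (fun hcon => (by omega : ¬ ((j : ℕ) + 1 = lam i')) hcon.2)]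
      rw [hw0, mul_zero, add_zero]
    · rw [dif_neg hlast]
      have hj1 : (j : ℕ) + 1 = lam i' := by
        have := j.isLt
        omega
      have hw1 : wgen (K := K) lam m ⟨i', him⟩ i' j = 1 := by
        simp [wgen, hj1]
      rw [hw1, mul_one, zero_add, hE, hcdef]
      simp only []
      rw [dif_pos (show 0 < lam ((⟨i', him⟩ : Fin m) : ℕ) by
        simp only [Fin.val_mk]; omega)]
      congr 1
      apply Fin.ext
      simp only [Fin.val_mk]
      omega
  · -- everything is zero
    have h1 : ∑ i : Fin m, c i * wgen lam m i i' j = 0 := by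
      apply Finset.sum_eq_zero
      intro i _
      have hcond : ¬ (i' = (i : ℕ) ∧ (j : ℕ) + 1 = lam i') := by
        intro hcon
        have := i.isLt
        omega
      simp only [wgen]
      rw [if_neg hcond, mul_zero]
    have h2 : shiftMap K lam (Emap lam m x') i' j = 0 := by
      rw [shiftMap_apply]
      by_cases h : (j : ℕ) + 1 < lam i'
      · rw [dif_pos h]
        simp only [Emap, LinearMap.coe_mk, AddHom.coe_mk]
        rw [dif_neg him]
        rfl
      · rw [dif_neg h]
    have h3 : Emap (K := K) lam m x i' j = 0 := by
      simp only [Emap, LinearMap.coe_mk, AddHom.coe_mk]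
      rw [dif_neg him]
      rfl
    rw [h1, h2, h3, add_zero]

end TopW

/-! ### Transfer along injective intertwiners -/

section Transfer

variable {V W : Type*} [AddCommGroup V] [Module K V] [AddCommGroup W] [Module K W]

lemma comp_pow (u : V →ₗ[K] W) (φA : V →ₗ[K] V) (φB : W →ₗ[K] W)
    (h : u ∘ₗ φA = φB ∘ₗ u) (k : ℕ) : u ∘ₗ (φA ^ k) = (φB ^ k) ∘ₗ u := by
  induction k with
  | zero =>
    apply LinearMap.ext
    intro x
    simp
  | succ n ih =>
    apply LinearMap.ext
    intro x
    rw [pow_succ, pow_succ, Module.End.mul_eq_comp, Module.End.mul_eq_comp]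
    simp only [LinearMap.comp_apply]
    have h1 := LinearMap.congr_fun ih (φA x)
    have h2 := LinearMap.congr_fun h x
    simp only [LinearMap.comp_apply] at h1 h2
    rw [h1, h2]

lemma map_pow_range (u : V →ₗ[K] W) (φA : V →ₗ[K] V) (φB : W →ₗ[K] W)
    (h : u ∘ₗ φA = φB ∘ₗ u) (k : ℕ) :
    (LinearMap.range u).map (φB ^ k) = (LinearMap.range (φA ^ k)).map u := by
  rw [← Submodule.map_top, ← Submodule.map_top, ← Submodule.map_comp, ← Submodule.map_comp,
    ← comp_pow u φA φB h k]

lemma ker_inf_map_eq (u : V →ₗ[K] W) (hui : Function.Injective u)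
    (φA : V →ₗ[K] V) (φB : W →ₗ[K] W) (h : u ∘ₗ φA = φB ∘ₗ u) (X : Submodule K V) :
    LinearMap.ker φB ⊓ X.map u = (LinearMap.ker φA ⊓ X).map u := by
  apply le_antisymm
  · rintro x ⟨hk, hm⟩
    obtain ⟨y, hyX, rfl⟩ := hm
    refine ⟨y, ⟨?_, hyX⟩, rfl⟩
    have hk' : φB (u y) = 0 := hk
    have h3 := LinearMap.congr_fun h y
    simp only [LinearMap.comp_apply] at h3
    apply hui
    rw [h3, hk', map_zero]
  · rintro x ⟨y, ⟨hky, hyX⟩, rfl⟩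
    constructor
    · show φB (u y) = 0
      have h3 := LinearMap.congr_fun h y
      simp only [LinearMap.comp_apply] at h3
      have h4 : φA y = 0 := hky
      rw [← h3, h4, map_zero]
    · exact ⟨y, hyX, rfl⟩

end Transfer

/-! ### Combinatorial summation lemma -/

lemma sum_bound {lam : ℕ → ℕ} (hA : Antitone lam) {N : ℕ} (hN : ∀ n, N ≤ n → lam n = 0)
    (m L : ℕ) (t : ℕ → ℕ) (h1 : ∀ k, t k ≤ m)
    (h2 : ∀ k, t k ≤ ((Finset.range N).filter (fun i => k < lam i)).card) :
    ∑ k ∈ Finset.range L, t k ≤ ∑ i ∈ Finset.range m, lam i := by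
  have step : ∀ k, t k ≤ ((Finset.range m).filter (fun i => k < lam i)).card := by
    intro k
    by_cases hall : ∀ i < m, k < lam i
    · have heq : (Finset.range m).filter (fun i => k < lam i) = Finset.range m :=
        Finset.filter_true_of_mem (fun i hi => hall i (Finset.mem_range.mp hi))
      rw [heq, Finset.card_range]
      exact h1 k
    · push_neg at hall
      obtain ⟨i0, hi0m, hi0⟩ := hall
      refine (h2 k).trans (Finset.card_le_card ?_)
      intro i hi
      rw [Finset.mem_filter] at hi ⊢
      refine ⟨Finset.mem_range.mpr ?_, hi.2⟩
      by_contra hcon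
      have hle : lam i ≤ lam i0 := hA (by omega)
      have := hi.2
      omega
  calc ∑ k ∈ Finset.range L, t k
      ≤ ∑ k ∈ Finset.range L, ((Finset.range m).filter (fun i => k < lam i)).card :=
        Finset.sum_le_sum (fun k _ => step k)
  _ = ∑ k ∈ Finset.range L, ∑ i ∈ Finset.range m, if k < lam i then 1 else 0 :=
        Finset.sum_congr rfl (fun k _ => Finset.card_filter _ _)
  _ = ∑ i ∈ Finset.range m, ∑ k ∈ Finset.range L, if k < lam i then 1 else 0 :=
        Finset.sum_comm
  _ ≤ ∑ i ∈ Finset.range m, lam i := by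
      apply Finset.sum_le_sum
      intro i _
      rw [← Finset.card_filter]
      have hsub : (Finset.range L).filter (fun k => k < lam i) ⊆ Finset.range (lam i) := by
        intro k hk
        rw [Finset.mem_filter] at hk
        exact Finset.mem_range.mpr hk.2
      have := Finset.card_le_card hsub
      rw [Finset.card_range] at this
      exact this



/-- If there is a short exact sequence of `K[T]`-modules
`0 → N_ν → N_σ → N_μ → 0` then for every `m ≥ 1`,
`Σ_{i=1}^m σ_i ≤ Σ_{i=1}^m (ν_i + μ_i)`. -/
theorem ses_partial_sums (K : Type) [Field K] (ν σ μ : ℕ → ℕ)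
    (hν : IsPartition ν) (hσ : IsPartition σ) (hμ : IsPartition μ)
    (u : NMod K ν →ₗ[K] NMod K σ) (p : NMod K σ →ₗ[K] NMod K μ)
    (hu : u ∘ₗ shiftMap K ν = shiftMap K σ ∘ₗ u)
    (hp : p ∘ₗ shiftMap K σ = shiftMap K μ ∘ₗ p)
    (hui : Function.Injective u) (hps : Function.Surjective p)
    (he : LinearMap.range u = LinearMap.ker p) :
    ∀ m, 1 ≤ m → psum σ m ≤ ∑ i ∈ Finset.range m, (ν i + μ i) := by
  intro m _
  obtain ⟨Nν, hNν⟩ := hν.2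
  obtain ⟨Nσ, hNσ⟩ := hσ.2
  obtain ⟨Nμ, hNμ⟩ := hμ.2
  haveI : FiniteDimensional K (NMod K ν) := NMod.finiteDimensional hNν
  haveI : FiniteDimensional K (NMod K σ) := NMod.finiteDimensional hNσ
  haveI : FiniteDimensional K (NMod K μ) := NMod.finiteDimensional hNμ
  -- the top-blocks submodule of N_σ
  let W : Submodule K (NMod K σ) := LinearMap.range (Emap (K := K) σ m)
  let w : Fin m → NMod K σ := wgen (K := K) σ m
  have hgen : W ≤ W.map (shiftMap K σ) ⊔ Submodule.span K (Set.range w) :=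
    Emap_range_gen (K := K) σ m
  -- generation for p(W)
  have hgenC : W.map p ≤ (W.map p).map (shiftMap K μ) ⊔
      Submodule.span K (Set.range (fun i => p (w i))) := by
    calc W.map p ≤ (W.map (shiftMap K σ) ⊔ Submodule.span K (Set.range w)).map p :=
          Submodule.map_mono hgen
    _ = (W.map (shiftMap K σ)).map p ⊔ (Submodule.span K (Set.range w)).map p :=
          Submodule.map_sup _ _ _
    _ = (W.map p).map (shiftMap K μ) ⊔
        Submodule.span K (Set.range (fun i => p (w i))) := by
        congr 1
        · rw [← Submodule.map_comp, hp, Submodule.map_comp]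
        · rw [Submodule.map_span, ← Set.range_comp]
          rfl
  -- splitting
  have hsplit := finrank_map_add_inf_ker p W
  rw [← he] at hsplit
  -- A side
  have hteleA : finrank K ↥(LinearMap.range u ⊓ W) = ∑ k ∈ Finset.range (σ 0),
      finrank K ↥(LinearMap.ker (shiftMap K σ) ⊓
        (LinearMap.range u ⊓ W).map (shiftMap K σ ^ k)) := by
    apply finrank_eq_sum_ker_inf
    rw [shiftMap_pow_eq_zero hσ.1 (le_refl (σ 0))]
    exact Submodule.map_zero _
  have hAm : ∀ k, finrank K ↥(LinearMap.ker (shiftMap K σ) ⊓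
      (LinearMap.range u ⊓ W).map (shiftMap K σ ^ k)) ≤ m := by
    intro k
    refine le_trans (Submodule.finrank_mono
      (inf_le_inf_left _ (Submodule.map_mono inf_le_right))) ?_
    exact finrank_ker_inf_map_pow_le (shiftMap K σ) W w hgen k
  have hAfil : ∀ k, finrank K ↥(LinearMap.ker (shiftMap K σ) ⊓
      (LinearMap.range u ⊓ W).map (shiftMap K σ ^ k)) ≤
      ((Finset.range Nν).filter (fun i => k < ν i)).card := by
    intro k
    have h1 : LinearMap.ker (shiftMap K σ) ⊓ (LinearMap.range u ⊓ W).map (shiftMap K σ ^ k)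
        ≤ LinearMap.ker (shiftMap K σ) ⊓ (LinearMap.range u).map (shiftMap K σ ^ k) :=
      inf_le_inf_left _ (Submodule.map_mono inf_le_left)
    calc finrank K ↥(LinearMap.ker (shiftMap K σ) ⊓
          (LinearMap.range u ⊓ W).map (shiftMap K σ ^ k))
        ≤ finrank K ↥(LinearMap.ker (shiftMap K σ) ⊓
            (LinearMap.range u).map (shiftMap K σ ^ k)) := Submodule.finrank_mono h1
    _ = finrank K ↥((LinearMap.ker (shiftMap K ν) ⊓
          LinearMap.range (shiftMap K ν ^ k)).map u) := by
        rw [map_pow_range u _ _ hu k,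
          ker_inf_map_eq u hui (shiftMap K ν) (shiftMap K σ) hu]
    _ = finrank K ↥(LinearMap.ker (shiftMap K ν) ⊓ LinearMap.range (shiftMap K ν ^ k)) :=
        ((Submodule.equivMapOfInjective u hui _).finrank_eq).symm
    _ ≤ ((Finset.range Nν).filter (fun i => k < ν i)).card :=
        finrank_ker_inf_range_pow_le hν.1 hNν k
  have hAsum : finrank K ↥(LinearMap.range u ⊓ W) ≤ ∑ i ∈ Finset.range m, ν i := by
    rw [hteleA]
    exact sum_bound hν.1 hNν m (σ 0) _ hAm hAfil
  -- C side
  have hteleC : finrank K ↥(W.map p) = ∑ k ∈ Finset.range (μ 0),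
      finrank K ↥(LinearMap.ker (shiftMap K μ) ⊓ (W.map p).map (shiftMap K μ ^ k)) := by
    apply finrank_eq_sum_ker_inf
    rw [shiftMap_pow_eq_zero hμ.1 (le_refl (μ 0))]
    exact Submodule.map_zero _
  have hCm : ∀ k, finrank K ↥(LinearMap.ker (shiftMap K μ) ⊓
      (W.map p).map (shiftMap K μ ^ k)) ≤ m := fun k =>
    finrank_ker_inf_map_pow_le (shiftMap K μ) (W.map p) (fun i => p (w i)) hgenC k
  have hCfil : ∀ k, finrank K ↥(LinearMap.ker (shiftMap K μ) ⊓
      (W.map p).map (shiftMap K μ ^ k)) ≤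
      ((Finset.range Nμ).filter (fun i => k < μ i)).card := by
    intro k
    have h1 : (W.map p).map (shiftMap K μ ^ k) ≤ LinearMap.range (shiftMap K μ ^ k) := by
      refine le_trans (Submodule.map_mono le_top) ?_
      rw [Submodule.map_top]
    refine le_trans (Submodule.finrank_mono (inf_le_inf_left _ h1)) ?_
    exact finrank_ker_inf_range_pow_le hμ.1 hNμ k
  have hCsum : finrank K ↥(W.map p) ≤ ∑ i ∈ Finset.range m, μ i := by
    rw [hteleC]
    exact sum_bound hμ.1 hNμ m (μ 0) _ hCm hCfil
  -- finish
  have hWrank : finrank K ↥W = psum σ m := finrank_Emap_range σ m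
  rw [Finset.sum_add_distrib]
  rw [hWrank] at hsplit
  omega

end LRGE
end

section
/- Let K be a field, let X, Y be objects of S_1, and let Z be any object of S_1 that is an extension of Y by X. Then for every j ≥ 1, Σ_{i=1}^j γ^{Y*X}_i ≥ Σ_{i=1}^j γ^Z_i and Σ_{i=1}^j β^{Y*X}_i ≥ Σ_{i=1}^j β^Z_i, where (γ^Z, β^Z) is the partition pair of Z and (γ^{Y*X}, β^{Y*X}) is the partition pair of the generic extension Y*X; in particular Y*X ⊴_dom Z. -/
open Module

namespace LRGE


section Aux

variable {K : Type} [Field K]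

/-! #### Combinatorics -/

lemma psum_mono (f : ℕ → ℕ) : Monotone (psum f) := fun _ _ hab =>
  Finset.sum_le_sum_of_subset (Finset.range_subset_range.2 hab)

lemma telescope (g : ℕ → ℕ) (hg : Monotone g) (h0 : g 0 = 0) (j : ℕ) :
    ∑ i ∈ Finset.range j, (g (i + 1) - g i) = g j := by
  induction j with
  | zero => simpa using h0.symm
  | succ n ih =>
    rw [Finset.sum_range_succ, ih]
    have := hg (Nat.le_succ n)
    simp only [Nat.succ_eq_add_one] at this
    omega

lemma gbsum_mono (βX γY βY : ℕ → ℕ) : Monotone (gbsum βX γY βY) := by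
  intro a b hab
  unfold gbsum
  have h1 := psum_mono βX hab
  have h2 := psum_mono γY hab
  have h3 : a - numParts βX ≤ b - numParts βX := by omega
  have h4 : ∑ i ∈ Finset.range a, (βY i - γY i) ≤ ∑ i ∈ Finset.range b, (βY i - γY i) :=
    Finset.sum_le_sum_of_subset (Finset.range_subset_range.2 hab)
  have := min_le_min h3 h4
  omega

lemma gbsum_zero (βX γY βY : ℕ → ℕ) : gbsum βX γY βY 0 = 0 := by
  simp [gbsum, psum]

lemma psum_geBeta (βX γY βY : ℕ → ℕ) (j : ℕ) :
    psum (geBeta βX γY βY) j = gbsum βX γY βY j := by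
  unfold psum geBeta
  simpa [gbsum_zero] using telescope (gbsum βX γY βY) (gbsum_mono βX γY βY) (gbsum_zero βX γY βY) j

lemma numParts_char {β : ℕ → ℕ} (hβ : IsPartition β) :
    ∀ i, i < numParts β ↔ β i ≠ 0 := by
  obtain ⟨anti, N, hN⟩ := hβ
  have hex : ∃ n, β n = 0 := ⟨N, hN N le_rfl⟩
  set n := Nat.find hex with hn
  have h1 : β n = 0 := Nat.find_spec hex
  have h3 : ∀ i, n ≤ i → β i = 0 := fun i hi => Nat.le_zero.mp (h1 ▸ anti hi)
  have hset : {i | β i ≠ 0} = Set.Iio n := by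
    ext i
    simp only [Set.mem_setOf_eq, Set.mem_Iio]
    constructor
    · intro h
      by_contra hc
      exact h (h3 i (by omega))
    · intro h
      exact Nat.find_min hex h
  have : numParts β = n := by
    rw [numParts, hset, ← Finset.coe_range, Set.ncard_coe_finset, Finset.card_range]
  intro i
  rw [this]
  constructor
  · intro h
    exact Nat.find_min hex h
  · intro h
    by_contra hc
    exact h (h3 i (by omega))

lemma sum_range_eq_of_vanish {f : ℕ → ℕ} {N M : ℕ} (hNM : N ≤ M)
    (h : ∀ n, N ≤ n → f n = 0) :
    ∑ i ∈ Finset.range M, f i = ∑ i ∈ Finset.range N, f i := by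
  refine (Finset.sum_subset (Finset.range_subset_range.2 hNM) ?_).symm
  intro x hx hnx
  simp only [Finset.mem_range] at hx hnx
  exact h x (by omega)

/-- P1: `psum β j ≤ Σ_{i<N} (β i - m) + j*m` for any vanishing bound `N`. -/
lemma psum_le_rank_bound {β : ℕ → ℕ} {N : ℕ} (hN : ∀ n, N ≤ n → β n = 0) (j m : ℕ) :
    psum β j ≤ (∑ i ∈ Finset.range N, (β i - m)) + j * m := by
  have h1 : ∑ i ∈ Finset.range j, (β i - m) ≤ ∑ i ∈ Finset.range (max j N), (β i - m) :=
    Finset.sum_le_sum_of_subset (Finset.range_subset_range.2 (le_max_left _ _))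
  have h2 : ∑ i ∈ Finset.range (max j N), (β i - m) = ∑ i ∈ Finset.range N, (β i - m) :=
    sum_range_eq_of_vanish (le_max_right _ _) (fun n hn => by rw [hN n hn]; omega)
  have h3 : psum β j ≤ (∑ i ∈ Finset.range j, (β i - m)) + j * m := by
    unfold psum
    calc ∑ i ∈ Finset.range j, β i ≤ ∑ i ∈ Finset.range j, ((β i - m) + m) :=
          Finset.sum_le_sum fun i _ => by omega
      _ = (∑ i ∈ Finset.range j, (β i - m)) + j * m := by
          rw [Finset.sum_add_distrib, Finset.sum_const, Finset.card_range, smul_eq_mul]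
  omega

/-- P2: with `m = β j`, the bound is attained (one inequality direction). -/
lemma rank_bound_le_psum {β : ℕ → ℕ} (hanti : Antitone β) {N : ℕ}
    (hN : ∀ n, N ≤ n → β n = 0) (j : ℕ) :
    (∑ i ∈ Finset.range N, (β i - β j)) + j * β j ≤ psum β j := by
  have h1 : ∑ i ∈ Finset.range N, (β i - β j) ≤ ∑ i ∈ Finset.range (max j N), (β i - β j) :=
    Finset.sum_le_sum_of_subset (Finset.range_subset_range.2 (le_max_right _ _))
  have h2 : ∑ i ∈ Finset.range (max j N), (β i - β j) = ∑ i ∈ Finset.range j, (β i - β j) :=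
    sum_range_eq_of_vanish (le_max_left _ _)
      (fun n hn => by have := hanti hn; omega)
  have h3 : (∑ i ∈ Finset.range j, (β i - β j)) + j * β j = psum β j := by
    unfold psum
    have hc : ∀ i ∈ Finset.range j, β i = (β i - β j) + β j := fun i hi => by
      have := hanti (le_of_lt (Finset.mem_range.mp hi)); omega
    rw [Finset.sum_congr rfl hc, Finset.sum_add_distrib, Finset.sum_const, Finset.card_range,
      smul_eq_mul]
  omega

end Aux


section NModAux

variable {K : Type} [Field K]

/-- Restriction equivalence for `NMod` with vanishing bound `N`. -/
noncomputable def nmodEquiv (μ : ℕ → ℕ) (N : ℕ) (h : ∀ n, N ≤ n → μ n = 0) :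
    NMod K μ ≃ₗ[K] (∀ i : Fin N, Fin (μ (i : ℕ)) → K) where
  toFun v := fun i => v i
  map_add' _ _ := rfl
  map_smul' _ _ := rfl
  invFun w := fun i => if h' : i < N then w ⟨i, h'⟩ else fun j =>
    False.elim (by
      have h0 := h i (le_of_not_gt h')
      have hj : (j : ℕ) < μ i := j.isLt
      omega)
  left_inv v := by
    funext i j
    by_cases h' : i < N
    · simp [h']
    · exact False.elim (by
        have h0 := h i (le_of_not_gt h')
        have hj : (j : ℕ) < μ i := j.isLt
        omega)
  right_inv w := by
    funext i j
    simp [i.isLt]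

lemma nmod_finiteDimensional (μ : ℕ → ℕ) (N : ℕ) (h : ∀ n, N ≤ n → μ n = 0) :
    FiniteDimensional K (NMod K μ) :=
  Module.Finite.equiv (nmodEquiv (K := K) μ N h).symm

lemma nmod_finrank (μ : ℕ → ℕ) (N : ℕ) (h : ∀ n, N ≤ n → μ n = 0) :
    Module.finrank K (NMod K μ) = ∑ i ∈ Finset.range N, μ i := by
  rw [(nmodEquiv (K := K) μ N h).finrank_eq, Module.finrank_pi_fintype]
  rw [← Fin.sum_univ_eq_sum_range (fun i => μ i) N]
  exact Finset.sum_congr rfl fun i _ => by simp [Module.finrank_pi]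

lemma shift_pow_apply (μ : ℕ → ℕ) (m : ℕ) (v : NMod K μ) (i : ℕ) (j : Fin (μ i)) :
    ((shiftMap K μ ^ m) v) i j = if h : (j : ℕ) + m < μ i then v i ⟨(j : ℕ) + m, h⟩ else 0 := by
  induction m generalizing v with
  | zero =>
    have hcond : (j : ℕ) + 0 < μ i := by have := j.isLt; omega
    rw [pow_zero, Module.End.one_apply, dif_pos hcond]
    exact congrArg (v i) (Fin.ext (by simp))
  | succ n ih =>
    rw [pow_succ, Module.End.mul_apply, ih]
    by_cases h2 : (j : ℕ) + n < μ i
    · rw [dif_pos h2]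
      show (if h' : ((j : ℕ) + n) + 1 < μ i then v i ⟨(j : ℕ) + n + 1, h'⟩ else 0) = _
      by_cases h3 : (j : ℕ) + n + 1 < μ i
      · rw [dif_pos h3, dif_pos (show (j : ℕ) + (n + 1) < μ i by omega)]
        exact congrArg (v i) (by simp only [Fin.mk.injEq]; omega)
      · rw [dif_neg h3, dif_neg (show ¬((j : ℕ) + (n + 1) < μ i) by omega)]
    · rw [dif_neg h2, dif_neg (show ¬((j : ℕ) + (n + 1) < μ i) by omega)]

/-- The projection `NMod μ → NMod (μ − m)`. -/
def truncP (μ : ℕ → ℕ) (m : ℕ) : NMod K μ →ₗ[K] NMod K (fun i => μ i - m) where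
  toFun v := fun i j => v i ⟨(j : ℕ) + m, by
    have hj : (j : ℕ) < μ i - m := j.isLt
    omega⟩
  map_add' _ _ := rfl
  map_smul' _ _ := rfl

/-- The inclusion `NMod (μ − m) → NMod μ`. -/
def truncJ (μ : ℕ → ℕ) (m : ℕ) : NMod K (fun i => μ i - m) →ₗ[K] NMod K μ where
  toFun w := fun i j => if h : (j : ℕ) < μ i - m then w i ⟨(j : ℕ), h⟩ else 0
  map_add' u v := by
    funext i j
    by_cases h : (j : ℕ) < μ i - m <;> simp [h]
  map_smul' c v := by
    funext i j
    by_cases h : (j : ℕ) < μ i - m <;> simp [h]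

lemma truncP_surjective (μ : ℕ → ℕ) (m : ℕ) : Function.Surjective (truncP (K := K) μ m) := by
  intro w
  refine ⟨fun i j => if h : m ≤ (j : ℕ) then w i ⟨(j : ℕ) - m, by
    have hj : (j : ℕ) < μ i := j.isLt
    show (j : ℕ) - m < μ i - m
    omega⟩ else 0, ?_⟩
  funext i j
  have hj : (j : ℕ) < μ i - m := j.isLt
  show (if h : m ≤ (j : ℕ) + m then
    w i ⟨(j : ℕ) + m - m, by omega⟩ else 0) = w i j
  rw [dif_pos (by omega : m ≤ (j : ℕ) + m)]
  exact congrArg (w i) (Fin.ext (by simp))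

lemma truncJ_injective (μ : ℕ → ℕ) (m : ℕ) : Function.Injective (truncJ (K := K) μ m) := by
  intro a b hab
  funext i j
  have h1 : (j : ℕ) < μ i - m := j.isLt
  have h2 := congrFun (congrFun hab i) ⟨(j : ℕ), by omega⟩
  show a i j = b i j
  simpa [truncJ, h1] using h2

lemma shift_pow_factor (μ : ℕ → ℕ) (m : ℕ) :
    (shiftMap K μ) ^ m = truncJ μ m ∘ₗ truncP μ m := by
  apply LinearMap.ext
  intro v
  funext i j
  rw [shift_pow_apply]
  show _ = (if h : (j : ℕ) < μ i - m then (truncP μ m v) i ⟨(j : ℕ), h⟩ else 0)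
  by_cases h : (j : ℕ) + m < μ i
  · rw [dif_pos h, dif_pos (show (j : ℕ) < μ i - m by omega)]
    rfl
  · rw [dif_neg h, dif_neg (show ¬((j : ℕ) < μ i - m) by omega)]

lemma rank_shift_pow (μ : ℕ → ℕ) (N : ℕ) (h : ∀ n, N ≤ n → μ n = 0) (m : ℕ) :
    Module.finrank K (LinearMap.range ((shiftMap K μ) ^ m)) =
      ∑ i ∈ Finset.range N, (μ i - m) := by
  haveI : FiniteDimensional K (NMod K (fun i => μ i - m)) :=
    nmod_finiteDimensional _ N (fun n hn => by show μ n - m = 0; rw [h n hn]; omega)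
  rw [shift_pow_factor, LinearMap.range_comp,
    LinearMap.range_eq_top.2 (truncP_surjective μ m), Submodule.map_top]
  have hker : LinearMap.ker (truncJ (K := K) μ m) = ⊥ :=
    LinearMap.ker_eq_bot.2 (truncJ_injective μ m)
  have hrn := LinearMap.finrank_range_add_finrank_ker (truncJ (K := K) μ m)
  rw [hker, finrank_bot] at hrn
  rw [← nmod_finrank (K := K) (fun i => μ i - m) N
    (fun n hn => by show μ n - m = 0; rw [h n hn]; omega)]
  omega

lemma comm_pow {A B : Type} [AddCommGroup A] [Module K A] [AddCommGroup B] [Module K B]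
    (f : A →ₗ[K] B) (a : A →ₗ[K] A) (b : B →ₗ[K] B) (h : f ∘ₗ a = b ∘ₗ f) (n : ℕ) :
    f ∘ₗ (a ^ n) = (b ^ n) ∘ₗ f := by
  induction n with
  | zero => simp [pow_zero, Module.End.one_eq_id]
  | succ k ih =>
    rw [pow_succ, pow_succ, Module.End.mul_eq_comp, Module.End.mul_eq_comp,
      ← LinearMap.comp_assoc, ih, LinearMap.comp_assoc, h, ← LinearMap.comp_assoc]

/-- Rank formula for powers of an operator of given Jordan type. -/
lemma rank_pow_eq {V : Type} [AddCommGroup V] [Module K V]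
    {φ : V →ₗ[K] V} {β : ℕ → ℕ} (hJ : JordanType K φ β)
    {N : ℕ} (hN : ∀ n, N ≤ n → β n = 0) (m : ℕ) :
    Module.finrank K (LinearMap.range (φ ^ m)) = ∑ i ∈ Finset.range N, (β i - m) := by
  obtain ⟨hpart, e, he⟩ := hJ
  have hcomm : (e : V →ₗ[K] NMod K β) ∘ₗ φ = shiftMap K β ∘ₗ (e : V →ₗ[K] NMod K β) :=
    LinearMap.ext fun v => he v
  have hpow := comm_pow (e : V →ₗ[K] NMod K β) φ (shiftMap K β) hcomm m
  have hrange : Submodule.map (e : V →ₗ[K] NMod K β) (LinearMap.range (φ ^ m)) =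
      LinearMap.range ((shiftMap K β) ^ m) := by
    rw [← LinearMap.range_comp, hpow, LinearMap.range_comp, LinearEquiv.range,
      Submodule.map_top]
  rw [← rank_shift_pow (K := K) β N hN m, ← hrange, LinearEquiv.finrank_map_eq]

lemma jordanType_shift {γ : ℕ → ℕ} (hγ : IsPartition γ) :
    JordanType K (shiftMap K γ) γ :=
  ⟨hγ, LinearEquiv.refl K (NMod K γ), fun _ => rfl⟩

end NModAux


section MasterAux

variable {K : Type} [Field K]

/-- Core dimension-counting: `dim f(R) ≤ dim f(ker p) + dim p(R)`. -/
lemma finrank_map_le_map_ker_add_map {B C : Type}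
    [AddCommGroup B] [Module K B] [FiniteDimensional K B]
    [AddCommGroup C] [Module K C] [FiniteDimensional K C]
    (f : B →ₗ[K] B) (p : B →ₗ[K] C) (R : Submodule K B) :
    Module.finrank K (Submodule.map f R) ≤
      Module.finrank K (Submodule.map f (LinearMap.ker p)) +
      Module.finrank K (Submodule.map p R) := by
  set N := LinearMap.ker p with hN
  set R' : Submodule K R := Submodule.comap R.subtype N with hR'
  obtain ⟨S', hS'⟩ := Submodule.exists_isCompl R'
  set S : Submodule K B := Submodule.map R.subtype S' with hS
  have hSR : S ≤ R := Submodule.map_subtype_le R S'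
  have hRsup : (R ⊓ N) ⊔ S = R := by
    rw [← Submodule.map_comap_subtype R N, ← hR', hS, ← Submodule.map_sup,
      hS'.codisjoint.eq_top, Submodule.map_top, Submodule.range_subtype]
  have hmap : Submodule.map f R = Submodule.map f (R ⊓ N) ⊔ Submodule.map f S := by
    conv_lhs => rw [← hRsup, Submodule.map_sup]
  have h1 : Module.finrank K (Submodule.map f R) ≤
      Module.finrank K (Submodule.map f (R ⊓ N)) + Module.finrank K (Submodule.map f S) := by
    rw [hmap]
    have := Submodule.finrank_sup_add_finrank_inf_eq
      (Submodule.map f (R ⊓ N)) (Submodule.map f S)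
    omega
  have h2 : Module.finrank K (Submodule.map f (R ⊓ N)) ≤
      Module.finrank K (Submodule.map f N) :=
    Submodule.finrank_mono (Submodule.map_mono inf_le_right)
  have h3 : Module.finrank K (Submodule.map f S) ≤ Module.finrank K S :=
    Submodule.finrank_map_le f S
  -- p is injective on S
  have hkerg : LinearMap.ker (p ∘ₗ S.subtype) = ⊥ := by
    rw [eq_bot_iff]
    rintro ⟨x, hxS⟩ hx
    have hxN : x ∈ N := by
      simpa [hN, LinearMap.mem_ker] using hx
    obtain ⟨y, hyS', hyx⟩ := hxS
    have hyR' : y ∈ R' := by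
      show (y : B) ∈ N
      have hyx' : (y : B) = x := hyx
      rw [hyx']
      exact hxN
    have hy0 : y ∈ R' ⊓ S' := ⟨hyR', hyS'⟩
    rw [hS'.disjoint.eq_bot] at hy0
    have : y = 0 := hy0
    subst this
    simp only [Submodule.mem_bot]
    exact Subtype.ext (by simpa using hyx.symm)
  have h4 : Module.finrank K S = Module.finrank K (Submodule.map p S) := by
    have hrn := LinearMap.finrank_range_add_finrank_ker (p ∘ₗ S.subtype)
    rw [hkerg, finrank_bot, LinearMap.range_comp, Submodule.range_subtype] at hrn
    omega
  have h5 : Module.finrank K (Submodule.map p S) ≤ Module.finrank K (Submodule.map p R) :=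
    Submodule.finrank_mono (Submodule.map_mono hSR)
  omega

/-- Master inequality: for intertwined `p ∘ b = c ∘ p`,
`rank b^(s+t) ≤ dim b^s(ker p) + rank c^t`. -/
lemma master_rank_le {B C : Type}
    [AddCommGroup B] [Module K B] [FiniteDimensional K B]
    [AddCommGroup C] [Module K C] [FiniteDimensional K C]
    (b : B →ₗ[K] B) (p : B →ₗ[K] C) (c : C →ₗ[K] C)
    (hpc : p ∘ₗ b = c ∘ₗ p) (s t : ℕ) :
    Module.finrank K (LinearMap.range (b ^ (s + t))) ≤
      Module.finrank K (Submodule.map (b ^ s) (LinearMap.ker p)) +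
      Module.finrank K (LinearMap.range (c ^ t)) := by
  have hsplit : LinearMap.range (b ^ (s + t)) =
      Submodule.map (b ^ s) (LinearMap.range (b ^ t)) := by
    rw [pow_add, Module.End.mul_eq_comp, LinearMap.range_comp]
  have hmain := finrank_map_le_map_ker_add_map (b ^ s) p (LinearMap.range (b ^ t))
  have hC : Module.finrank K (Submodule.map p (LinearMap.range (b ^ t))) ≤
      Module.finrank K (LinearMap.range (c ^ t)) := by
    have : Submodule.map p (LinearMap.range (b ^ t)) = LinearMap.range (p ∘ₗ b ^ t) :=
      (LinearMap.range_comp _ _).symm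
    rw [this, comm_pow p b c hpc t, LinearMap.range_comp]
    have hle : Submodule.map (c ^ t) (LinearMap.range p) ≤ LinearMap.range (c ^ t) := by
      rw [← Submodule.map_top (c ^ t)]
      exact Submodule.map_mono le_top
    exact Submodule.finrank_mono hle
  rw [hsplit]
  omega

/-- Factorization of a linear map through a surjection. -/
lemma factor_through {V W U : Type}
    [AddCommGroup V] [Module K V] [AddCommGroup W] [Module K W]
    [AddCommGroup U] [Module K U]
    (q : V →ₗ[K] W) (hq : Function.Surjective q)
    (g : V →ₗ[K] U) (hker : LinearMap.ker q ≤ LinearMap.ker g) :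
    ∃ g' : W →ₗ[K] U, g' ∘ₗ q = g := by
  obtain ⟨σ, hσ⟩ := q.exists_rightInverse_of_surjective (LinearMap.range_eq_top.2 hq)
  refine ⟨g ∘ₗ σ, ?_⟩
  apply LinearMap.ext
  intro v
  have hqv : q (σ (q v)) = q v := LinearMap.congr_fun hσ (q v)
  have hmem : σ (q v) - v ∈ LinearMap.ker q := by
    simp [LinearMap.mem_ker, map_sub, hqv]
  have := hker hmem
  simp only [LinearMap.mem_ker, map_sub, sub_eq_zero] at this
  simpa using this

end MasterAux

/-- If `Z` is any object of `S_1` which is an extension of `Y` by `X`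
(all in `S_1`, with partition pairs `(γX, βX)`, `(γY, βY)`, `(γZ, βZ)`), then for
every `j ≥ 1` the partial sums of `γ^{Y*X}` and `β^{Y*X}` dominate those of `γZ`
and `βZ`; in particular `Y*X ⊴_dom Z`. -/
theorem generic_ext_dom_min (K : Type) [Field K]
    (X₁ X₂ : Type) [AddCommGroup X₁] [Module K X₁] [AddCommGroup X₂] [Module K X₂]
    [FiniteDimensional K X₁] [FiniteDimensional K X₂]
    (Y₁ Y₂ : Type) [AddCommGroup Y₁] [Module K Y₁] [AddCommGroup Y₂] [Module K Y₂]
    [FiniteDimensional K Y₁] [FiniteDimensional K Y₂]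
    (Z₁ Z₂ : Type) [AddCommGroup Z₁] [Module K Z₁] [AddCommGroup Z₂] [Module K Z₂]
    [FiniteDimensional K Z₁] [FiniteDimensional K Z₂]
    (φX : X₂ →ₗ[K] X₂) (hφX : IsNilpotent φX)
    (fX : X₁ →ₗ[K] X₂) (hfX : Function.Injective fX) (hsX : φX ∘ₗ fX = 0)
    (φY : Y₂ →ₗ[K] Y₂) (hφY : IsNilpotent φY)
    (fY : Y₁ →ₗ[K] Y₂) (hfY : Function.Injective fY) (hsY : φY ∘ₗ fY = 0)
    (φZ : Z₂ →ₗ[K] Z₂) (hφZ : IsNilpotent φZ)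
    (fZ : Z₁ →ₗ[K] Z₂) (hfZ : Function.Injective fZ) (hsZ : φZ ∘ₗ fZ = 0)
    (γX βX γY βY γZ βZ : ℕ → ℕ)
    (hβX : JordanType K φX βX) (hγX : CokerType K fX φX γX)
    (hβY : JordanType K φY βY) (hγY : CokerType K fY φY γY)
    (hβZ : JordanType K φZ βZ) (hγZ : CokerType K fZ φZ γZ)
    (hext : IsExt K
      (0 : X₁ →ₗ[K] X₁) φX fX
      (0 : Z₁ →ₗ[K] Z₁) φZ fZ
      (0 : Y₁ →ₗ[K] Y₁) φY fY) :
    ∀ j, 1 ≤ j →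
      psum γZ j ≤ psum (fun i => γX i + γY i) j ∧
      psum βZ j ≤ psum (geBeta βX γY βY) j := by
  classical
  obtain ⟨u₁, u₂, p₁, p₂, -, hu₂φ, hfu, -, hp₂φ, hfp, -, hu₂inj, hp₁surj, hp₂surj,
    hex₁, hex₂⟩ := hext
  obtain ⟨hpγX, qX, hqXsurj, hqXker, hqXcomm⟩ := hγX
  obtain ⟨hpγY, qY, hqYsurj, hqYker, hqYcomm⟩ := hγY
  obtain ⟨hpγZ, qZ, hqZsurj, hqZker, hqZcomm⟩ := hγZ
  obtain ⟨haγX, NγX, hNγX⟩ := hpγX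
  obtain ⟨haγY, NγY, hNγY⟩ := hpγY
  obtain ⟨haγZ, NγZ, hNγZ⟩ := hpγZ
  obtain ⟨haβZ, NβZ, hNβZ⟩ := hβZ.1
  obtain ⟨haβY, NβY, hNβY⟩ := hβY.1
  have haβX : Antitone βX := hβX.1.1
  haveI hFDγX : FiniteDimensional K (NMod K γX) := nmod_finiteDimensional γX NγX hNγX
  haveI hFDγY : FiniteDimensional K (NMod K γY) := nmod_finiteDimensional γY NγY hNγY
  haveI hFDγZ : FiniteDimensional K (NMod K γZ) := nmod_finiteDimensional γZ NγZ hNγZ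
  -- pointwise forms
  have hu₂φ' : ∀ v, u₂ (φX v) = φZ (u₂ v) := fun v => by
    simpa using LinearMap.congr_fun hu₂φ v
  have hp₂φ' : ∀ v, p₂ (φZ v) = φY (p₂ v) := fun v => by
    simpa using LinearMap.congr_fun hp₂φ v
  have hfu' : ∀ v, fZ (u₁ v) = u₂ (fX v) := fun v => by
    simpa using LinearMap.congr_fun hfu v
  have hfp' : ∀ v, fY (p₁ v) = p₂ (fZ v) := fun v => by
    simpa using LinearMap.congr_fun hfp v
  have hqXc : ∀ v, qX (φX v) = shiftMap K γX (qX v) := fun v => by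
    simpa using LinearMap.congr_fun hqXcomm v
  have hqYc : ∀ v, qY (φY v) = shiftMap K γY (qY v) := fun v => by
    simpa using LinearMap.congr_fun hqYcomm v
  have hqZc : ∀ v, qZ (φZ v) = shiftMap K γZ (qZ v) := fun v => by
    simpa using LinearMap.congr_fun hqZcomm v
  -- induced maps on the cokernels
  have hker1 : LinearMap.ker qX ≤ LinearMap.ker (qZ ∘ₗ u₂) := by
    intro v hv
    rw [hqXker] at hv
    obtain ⟨x₁, rfl⟩ := hv
    simp only [LinearMap.mem_ker, LinearMap.coe_comp, Function.comp_apply]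
    rw [← hfu' x₁]
    have hm : fZ (u₁ x₁) ∈ LinearMap.ker qZ := by
      rw [hqZker]; exact ⟨u₁ x₁, rfl⟩
    exact LinearMap.mem_ker.mp hm
  obtain ⟨ubar, hubar⟩ := factor_through qX hqXsurj (qZ ∘ₗ u₂) hker1
  have hubar' : ∀ v, ubar (qX v) = qZ (u₂ v) := fun v => by
    simpa using LinearMap.congr_fun hubar v
  have hker2 : LinearMap.ker qZ ≤ LinearMap.ker (qY ∘ₗ p₂) := by
    intro v hv
    rw [hqZker] at hv
    obtain ⟨z₁, rfl⟩ := hv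
    simp only [LinearMap.mem_ker, LinearMap.coe_comp, Function.comp_apply]
    rw [← hfp' z₁]
    have hm : fY (p₁ z₁) ∈ LinearMap.ker qY := by
      rw [hqYker]; exact ⟨p₁ z₁, rfl⟩
    exact LinearMap.mem_ker.mp hm
  obtain ⟨pbar, hpbar⟩ := factor_through qZ hqZsurj (qY ∘ₗ p₂) hker2
  have hpbar' : ∀ v, pbar (qZ v) = qY (p₂ v) := fun v => by
    simpa using LinearMap.congr_fun hpbar v
  have hubarS : ubar ∘ₗ shiftMap K γX = shiftMap K γZ ∘ₗ ubar := by
    apply (LinearMap.cancel_right hqXsurj).mp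
    apply LinearMap.ext
    intro x
    simp only [LinearMap.coe_comp, Function.comp_apply]
    rw [← hqXc x, hubar' (φX x), hu₂φ' x, hqZc (u₂ x), hubar' x]
  have hpbarS : pbar ∘ₗ shiftMap K γZ = shiftMap K γY ∘ₗ pbar := by
    apply (LinearMap.cancel_right hqZsurj).mp
    apply LinearMap.ext
    intro z
    simp only [LinearMap.coe_comp, Function.comp_apply]
    rw [← hqZc z, hpbar' (φZ z), hp₂φ' z, hqYc (p₂ z), hpbar' z]
  have hkerpbar : LinearMap.ker pbar ≤ LinearMap.range ubar := by
    intro n hn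
    obtain ⟨z, rfl⟩ := hqZsurj n
    have h0 : qY (p₂ z) = 0 := by
      rw [← hpbar' z]
      exact LinearMap.mem_ker.mp hn
    have h1 : p₂ z ∈ LinearMap.ker qY := LinearMap.mem_ker.mpr h0
    rw [hqYker] at h1
    obtain ⟨y₁, hy⟩ := h1
    obtain ⟨z', hz'⟩ := hp₁surj y₁
    have h2 : p₂ (z - fZ z') = 0 := by
      rw [map_sub, ← hfp' z', hz', hy, sub_self]
    have h3 : z - fZ z' ∈ LinearMap.range u₂ := by
      rw [hex₂]
      exact LinearMap.mem_ker.mpr h2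
    obtain ⟨x, hx⟩ := h3
    refine ⟨qX x, ?_⟩
    have h4 : qZ (fZ z') = 0 := by
      have hm : fZ z' ∈ LinearMap.ker qZ := by
        rw [hqZker]; exact ⟨z', rfl⟩
      exact LinearMap.mem_ker.mp hm
    rw [hubar' x, hx, map_sub, h4, sub_zero]
  -- numParts of βX
  have hℓchar : ∀ i, i < numParts βX ↔ βX i ≠ 0 := numParts_char hβX.1
  set ℓ := numParts βX with hℓdef
  have hβXvan : ∀ n, ℓ ≤ n → βX n = 0 := by
    intro n hn
    by_contra hc
    have := (hℓchar n).mpr hc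
    omega
  intro j hj
  constructor
  · -- γ part
    have h1 : psum γZ j ≤ (∑ i ∈ Finset.range NγZ, (γZ i - (γX j + γY j))) +
        j * (γX j + γY j) := psum_le_rank_bound hNγZ j (γX j + γY j)
    have h2 : Module.finrank K (LinearMap.range ((shiftMap K γZ) ^ (γX j + γY j))) =
        ∑ i ∈ Finset.range NγZ, (γZ i - (γX j + γY j)) :=
      rank_shift_pow γZ NγZ hNγZ (γX j + γY j)
    have h3 := master_rank_le (shiftMap K γZ) pbar (shiftMap K γY) hpbarS (γX j) (γY j)
    have h4 : Module.finrank K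
        (Submodule.map ((shiftMap K γZ) ^ (γX j)) (LinearMap.ker pbar)) ≤
        Module.finrank K (LinearMap.range ((shiftMap K γX) ^ (γX j))) := by
      have hc : Submodule.map ((shiftMap K γZ) ^ (γX j)) (LinearMap.range ubar) =
          Submodule.map ubar (LinearMap.range ((shiftMap K γX) ^ (γX j))) := by
        rw [← LinearMap.range_comp, ← comm_pow ubar _ _ hubarS (γX j), LinearMap.range_comp]
      have ha : Module.finrank K
          (Submodule.map ((shiftMap K γZ) ^ (γX j)) (LinearMap.ker pbar)) ≤
          Module.finrank K (Submodule.map ((shiftMap K γZ) ^ (γX j))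
            (LinearMap.range ubar)) :=
        Submodule.finrank_mono (Submodule.map_mono hkerpbar)
      have hb : Module.finrank K (Submodule.map ((shiftMap K γZ) ^ (γX j))
          (LinearMap.range ubar)) ≤
          Module.finrank K (LinearMap.range ((shiftMap K γX) ^ (γX j))) := by
        rw [hc]
        exact Submodule.finrank_map_le _ _
      omega
    have h5 : Module.finrank K (LinearMap.range ((shiftMap K γX) ^ (γX j))) +
        j * γX j ≤ psum γX j := by
      rw [rank_shift_pow γX NγX hNγX (γX j)]
      exact rank_bound_le_psum haγX hNγX j
    have h6 : Module.finrank K (LinearMap.range ((shiftMap K γY) ^ (γY j))) +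
        j * γY j ≤ psum γY j := by
      rw [rank_shift_pow γY NγY hNγY (γY j)]
      exact rank_bound_le_psum haγY hNγY j
    have h7 : psum (fun i => γX i + γY i) j = psum γX j + psum γY j := by
      unfold psum
      rw [Finset.sum_add_distrib]
    rw [h7]
    have hmul : j * (γX j + γY j) = j * γX j + j * γY j := Nat.mul_add j _ _
    omega
  · -- β part
    -- E1 : the classical bound
    have hE1 : psum βZ j ≤ psum βX j + psum βY j := by
      have h1 : psum βZ j ≤ (∑ i ∈ Finset.range NβZ, (βZ i - (βX j + βY j))) +
          j * (βX j + βY j) := psum_le_rank_bound hNβZ j (βX j + βY j)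
      have h2 : Module.finrank K (LinearMap.range (φZ ^ (βX j + βY j))) =
          ∑ i ∈ Finset.range NβZ, (βZ i - (βX j + βY j)) :=
        rank_pow_eq hβZ hNβZ (βX j + βY j)
      have h3 := master_rank_le φZ p₂ φY hp₂φ (βX j) (βY j)
      have h4 : Module.finrank K (Submodule.map (φZ ^ (βX j)) (LinearMap.ker p₂)) ≤
          Module.finrank K (LinearMap.range (φX ^ (βX j))) := by
        have hc : Submodule.map (φZ ^ (βX j)) (LinearMap.range u₂) =
            Submodule.map u₂ (LinearMap.range (φX ^ (βX j))) := by
          rw [← LinearMap.range_comp, ← comm_pow u₂ φX φZ hu₂φ (βX j), LinearMap.range_comp]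
        rw [← hex₂, hc]
        exact Submodule.finrank_map_le _ _
      have h5 : Module.finrank K (LinearMap.range (φX ^ (βX j))) + j * βX j ≤
          psum βX j := by
        rw [rank_pow_eq hβX hβXvan (βX j)]
        exact rank_bound_le_psum haβX hβXvan j
      have h6 : Module.finrank K (LinearMap.range (φY ^ (βY j))) + j * βY j ≤
          psum βY j := by
        rw [rank_pow_eq hβY hNβY (βY j)]
        exact rank_bound_le_psum haβY hNβY j
      have hmul : j * (βX j + βY j) = j * βX j + j * βY j := Nat.mul_add j _ _
      omega
    -- E2 : the refined bound
    have hE2 : psum βZ j ≤ psum βX j + psum γY j + (j - ℓ) := by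
      -- choose the exponent s ≥ 1 on the X side
      have hchoice : ∃ s, 1 ≤ s ∧
          Module.finrank K (LinearMap.range (φX ^ s)) + j * s ≤
            psum βX j + (j - ℓ) := by
        by_cases hjl : j < ℓ
        · refine ⟨βX j, ?_, ?_⟩
          · have := (hℓchar j).mp hjl
            omega
          · rw [rank_pow_eq hβX hβXvan (βX j)]
            have := rank_bound_le_psum haβX hβXvan j
            omega
        · refine ⟨1, le_rfl, ?_⟩
          have hℓj : ℓ ≤ j := not_lt.mp hjl
          have e1 : Module.finrank K (LinearMap.range (φX ^ 1)) =
              ∑ i ∈ Finset.range ℓ, (βX i - 1) := rank_pow_eq hβX hβXvan 1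
          have e2 : psum βX j = ∑ i ∈ Finset.range ℓ, βX i :=
            sum_range_eq_of_vanish hℓj hβXvan
          have e3 : ∑ i ∈ Finset.range ℓ, βX i =
              (∑ i ∈ Finset.range ℓ, (βX i - 1)) + ℓ := by
            have hc : ∀ i ∈ Finset.range ℓ, βX i = (βX i - 1) + 1 := fun i hi => by
              have := (hℓchar i).mp (Finset.mem_range.mp hi)
              omega
            rw [Finset.sum_congr rfl hc, Finset.sum_add_distrib, Finset.sum_const,
              Finset.card_range, smul_eq_mul, mul_one]
          omega
      obtain ⟨s, hs1, hsX⟩ := hchoice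
      -- the intertwined projection onto the cokernel of Y
      have hpc : (qY ∘ₗ p₂) ∘ₗ φZ = shiftMap K γY ∘ₗ (qY ∘ₗ p₂) := by
        apply LinearMap.ext
        intro z
        simp only [LinearMap.coe_comp, Function.comp_apply]
        rw [hp₂φ' z, hqYc (p₂ z)]
      have h1 : psum βZ j ≤ (∑ i ∈ Finset.range NβZ, (βZ i - (s + γY j))) +
          j * (s + γY j) := psum_le_rank_bound hNβZ j (s + γY j)
      have h2 : Module.finrank K (LinearMap.range (φZ ^ (s + γY j))) =
          ∑ i ∈ Finset.range NβZ, (βZ i - (s + γY j)) :=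
        rank_pow_eq hβZ hNβZ (s + γY j)
      have h3 := master_rank_le φZ (qY ∘ₗ p₂) (shiftMap K γY) hpc s (γY j)
      -- the kernel of qY ∘ p₂ is contained in range u₂ ⊔ range fZ
      have hkerM : LinearMap.ker (qY ∘ₗ p₂) ≤ LinearMap.range u₂ ⊔ LinearMap.range fZ := by
        intro z hz
        have h0 : qY (p₂ z) = 0 := by
          simpa [LinearMap.mem_ker] using hz
        have hk : p₂ z ∈ LinearMap.ker qY := LinearMap.mem_ker.mpr h0
        rw [hqYker] at hk
        obtain ⟨y₁, hy⟩ := hk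
        obtain ⟨z', hz'⟩ := hp₁surj y₁
        have hpz : p₂ (z - fZ z') = 0 := by
          rw [map_sub, ← hfp' z', hz', hy, sub_self]
        have hmem : z - fZ z' ∈ LinearMap.range u₂ := by
          rw [hex₂]
          exact LinearMap.mem_ker.mpr hpz
        obtain ⟨x, hx⟩ := hmem
        have hzeq : z = u₂ x + fZ z' := by
          rw [hx]
          abel
        exact Submodule.mem_sup.mpr ⟨u₂ x, ⟨x, rfl⟩, fZ z', ⟨z', rfl⟩, hzeq.symm⟩
      -- dimension bound on the X side of the master inequality
      have h4 : Module.finrank K (Submodule.map (φZ ^ s) (LinearMap.ker (qY ∘ₗ p₂))) ≤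
          Module.finrank K (LinearMap.range (φX ^ s)) := by
        obtain ⟨s', rfl⟩ : ∃ s', s = s' + 1 := ⟨s - 1, by omega⟩
        have hMmap : Submodule.map (φZ ^ (s' + 1))
            (LinearMap.range u₂ ⊔ LinearMap.range fZ) =
            Submodule.map u₂ (LinearMap.range (φX ^ (s' + 1))) := by
          rw [pow_succ, Module.End.mul_eq_comp, Submodule.map_comp, Submodule.map_sup]
          have e1 : Submodule.map φZ (LinearMap.range u₂) =
              Submodule.map u₂ (LinearMap.range φX) := by
            rw [← LinearMap.range_comp, ← hu₂φ, LinearMap.range_comp]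
          have e2 : Submodule.map φZ (LinearMap.range fZ) = ⊥ := by
            rw [← LinearMap.range_comp, hsZ, LinearMap.range_zero]
          rw [e1, e2, sup_bot_eq, ← Submodule.map_comp, ← comm_pow u₂ φX φZ hu₂φ s',
            Submodule.map_comp, ← LinearMap.range_comp, ← Module.End.mul_eq_comp, ← pow_succ]
        have ha : Module.finrank K (Submodule.map (φZ ^ (s' + 1))
            (LinearMap.ker (qY ∘ₗ p₂))) ≤
            Module.finrank K (Submodule.map (φZ ^ (s' + 1))
              (LinearMap.range u₂ ⊔ LinearMap.range fZ)) :=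
          Submodule.finrank_mono (Submodule.map_mono hkerM)
        have hb : Module.finrank K (Submodule.map (φZ ^ (s' + 1))
            (LinearMap.range u₂ ⊔ LinearMap.range fZ)) ≤
            Module.finrank K (LinearMap.range (φX ^ (s' + 1))) := by
          rw [hMmap]
          exact Submodule.finrank_map_le _ _
        omega
      have h6 : Module.finrank K (LinearMap.range ((shiftMap K γY) ^ (γY j))) +
          j * γY j ≤ psum γY j := by
        rw [rank_shift_pow γY NγY hNγY (γY j)]
        exact rank_bound_le_psum haγY hNγY j
      have hmul : j * (s + γY j) = j * s + j * γY j := Nat.mul_add j _ _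
      omega
    -- combine
    rw [psum_geBeta]
    unfold gbsum
    rw [← hℓdef]
    rcases le_total (j - ℓ) (∑ i ∈ Finset.range j, (βY i - γY i)) with hmin | hmin
    · rw [min_eq_left hmin]
      omega
    · rw [min_eq_right hmin]
      have hYsplit : psum βY j ≤ psum γY j + ∑ i ∈ Finset.range j, (βY i - γY i) := by
        unfold psum
        rw [← Finset.sum_add_distrib]
        exact Finset.sum_le_sum fun i _ => by omega
      omega

end LRGE
end

section
/- Let (γ^X, β^X) and (γ^Y, β^Y) be LR-pairs, let ℓ be the number of parts of β^X, set γ^Z = γ^X + γ^Y (componentwise sum), and define the sequence δ = (δ_1, δ_2, …) by its partial sums Σ_{i=1}^k δ_i = Σ_{i=1}^k (β^X_i + γ^Y_i) + min( max(0, k − ℓ), Σ_{i=1}^k (β^Y_i − γ^Y_i) ) for every k ≥ 1. Then δ is weakly decreasing (hence a partition) and γ^Z_i ≤ δ_i ≤ γ^Z_i + 1 for all i; that is, (γ^Z, δ) is again an LR-pair, so the generic-extension product of LR-pairs is well defined. -/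
open Module

namespace LRGE

/-- For a partition `f`, part `k` is nonzero iff `k < numParts f`. -/
lemma lt_numParts_iff (f : ℕ → ℕ) (hf : IsPartition f) (k : ℕ) :
    f k ≠ 0 ↔ k < numParts f := by
  obtain ⟨hmono, N, hN⟩ := hf
  have hfin : {i | f i ≠ 0}.Finite := by
    apply Set.Finite.subset (Set.finite_Iio N)
    intro i hi
    by_contra hc
    exact hi (hN i (by simpa using hc))
  constructor
  · intro hk
    have hsub : Set.Iic k ⊆ {i | f i ≠ 0} := by
      intro j hj
      have := hmono (Set.mem_Iic.mp hj)
      simp only [Set.mem_setOf_eq]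
      omega
    have := Set.ncard_le_ncard hsub hfin
    rw [← Finset.coe_Iic, Set.ncard_coe_finset, Nat.card_Iic] at this
    unfold numParts
    omega
  · intro hk
    by_contra hc
    have hsub : {i | f i ≠ 0} ⊆ Set.Iio k := by
      intro j hj
      simp only [Set.mem_setOf_eq] at hj
      simp only [Set.mem_Iio]
      by_contra hcj
      push_neg at hcj
      have := hmono hcj
      omega
    have := Set.ncard_le_ncard hsub (Set.finite_Iio k)
    rw [← Finset.coe_Iio, Set.ncard_coe_finset, Nat.card_Iio] at this
    unfold numParts at hk
    omega

/-- Let `(γX, βX)` and `(γY, βY)` be LR-pairs, `ℓ` the number of parts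
of `βX`, `γZ = γX + γY`, and let `δ` be defined by its partial sums
`Σ_{i=1}^k δ_i = Σ_{i=1}^k (βX_i + γY_i) + min (max 0 (k - ℓ)) (Σ_{i=1}^k (βY_i - γY_i))`.
Then `δ` is weakly decreasing (hence a partition) and `γZ_i ≤ δ_i ≤ γZ_i + 1` for all
`i`; that is, `(γZ, δ)` is again an LR-pair. -/
theorem geProd_isLRPair (γX βX γY βY : ℕ → ℕ)
    (hX : IsLRPair γX βX) (hY : IsLRPair γY βY)
    (δ : ℕ → ℕ)
    (hδ : ∀ k, 1 ≤ k →
      psum δ k = psum βX k + psum γY k +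
        min (k - numParts βX) (∑ i ∈ Finset.range k, (βY i - γY i))) :
    Antitone δ ∧ IsLRPair (fun i => γX i + γY i) δ := by
  obtain ⟨hγX, hβX, hXb⟩ := hX
  obtain ⟨hγY, hβY, hYb⟩ := hY
  set ℓ := numParts βX with hℓdef
  set e : ℕ → ℕ := fun k => ∑ i ∈ Finset.range k, (βY i - γY i) with hedef
  set m : ℕ → ℕ := fun k => min (k - ℓ) (e k) with hmdef
  have hesucc : ∀ k, e (k + 1) = e k + (βY k - γY k) := fun k => Finset.sum_range_succ _ _
  have hεle : ∀ k, βY k - γY k ≤ 1 := fun k => by have := hYb k; omega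
  have hmm : ∀ k, m k = min (k - ℓ) (e k) := fun k => rfl
  have hmmono : ∀ k, m k ≤ m (k + 1) := by
    intro k
    have h1 := hesucc k
    have h2 := hmm k; have h3 := hmm (k + 1)
    omega
  have hmstep : ∀ k, m (k + 1) ≤ m k + 1 := by
    intro k
    have h1 := hesucc k
    have h2 := hmm k; have h3 := hmm (k + 1)
    have := hεle k
    omega
  -- partial sums of δ
  have hS : ∀ k, psum δ k = psum βX k + psum γY k + m k := by
    intro k
    rcases Nat.eq_zero_or_pos k with hk | hk
    · subst hk
      simp [psum, hmm 0]
    · exact hδ k hk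
  have hkey : ∀ k, δ k + m k = βX k + γY k + m (k + 1) := by
    intro k
    have h1 := hS k
    have h2 := hS (k + 1)
    have e1 : psum δ (k + 1) = psum δ k + δ k := Finset.sum_range_succ _ _
    have e2 : psum βX (k + 1) = psum βX k + βX k := Finset.sum_range_succ _ _
    have e3 : psum γY (k + 1) = psum γY k + γY k := Finset.sum_range_succ _ _
    omega
  -- upper bound
  have hupper : ∀ k, δ k ≤ γX k + γY k + 1 := by
    intro k
    have h1 := hkey k
    have h2 := hmstep k
    have h3 := hXb k
    by_cases hc : βX k ≤ γX k
    · omega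
    · -- βX k = γX k + 1, so βX k ≠ 0, hence k < ℓ and m (k+1) = 0
      have hne : βX k ≠ 0 := by omega
      have hklt : k < ℓ := (lt_numParts_iff βX hβX k).mp hne
      have h4 := hmm (k + 1)
      have h5 := hmmono k
      omega
  -- lower bound
  have hlower : ∀ k, γX k + γY k ≤ δ k := by
    intro k
    have h1 := hkey k
    have h2 := hmmono k
    have h3 := hXb k
    omega
  -- antitone step
  have hstep : ∀ k, δ (k + 1) ≤ δ k := by
    intro k
    have h1 := hkey k
    have h2 : δ (k + 1) + m (k + 1) = βX (k + 1) + γY (k + 1) + m (k + 2) := hkey (k + 1)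
    have hm1 := hmmono k
    have hm2 : m (k + 1) ≤ m (k + 2) := hmmono (k + 1)
    have hs1 := hmstep k
    have hs2 : m (k + 2) ≤ m (k + 1) + 1 := hmstep (k + 1)
    have hbx : βX (k + 1) ≤ βX k := hβX.1 (Nat.le_succ k)
    have hgy : γY (k + 1) ≤ γY k := hγY.1 (Nat.le_succ k)
    by_cases hdd : m (k + 2) - m (k + 1) ≤ m (k + 1) - m k
    · omega
    · -- hard case: m (k+2) = m (k+1) + 1 and m (k+1) = m k
      have hup : m (k + 2) = m (k + 1) + 1 ∧ m (k + 1) = m k := by omega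
      have hq1 := hmm k; have hq2 := hmm (k + 1); have hq3 := hmm (k + 2)
      have he1 := hesucc k
      have he2 : e (k + 2) = e (k + 1) + (βY (k + 1) - γY (k + 1)) := hesucc (k + 1)
      by_cases hcase : e (k + 1) ≤ (k + 1) - ℓ
      · -- m (k+1) = e (k+1); derive βY (k+1) = γY (k+1) + 1 and βY k = γY k
        have hby1 : βY (k + 1) = γY (k + 1) + 1 := by
          have := hYb (k + 1)
          omega
        have hbyk : βY k = γY k := by
          have := hYb k
          omega
        have hbymono : βY (k + 1) ≤ βY k := hβY.1 (Nat.le_succ k)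
        omega
      · -- m (k+1) = (k+1) - ℓ < e (k+1); forces ℓ = k + 1
        have hlk : ℓ = k + 1 := by omega
        have hbxk : βX k ≠ 0 := (lt_numParts_iff βX hβX k).mpr (by omega)
        have hbxk1 : βX (k + 1) = 0 := by
          by_contra hc
          have := (lt_numParts_iff βX hβX (k + 1)).mp hc
          omega
        omega
  have hanti : Antitone δ := antitone_nat_of_succ_le hstep
  -- eventual vanishing of δ
  obtain ⟨N1, hN1⟩ := hβX.2
  obtain ⟨N2, hN2⟩ := hγY.2
  obtain ⟨N3, hN3⟩ := hβY.2
  obtain ⟨N4, hN4⟩ := hγY.2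
  set N := max (max N1 N2) N3 with hNdef
  have heconst : ∀ k, N ≤ k → e k = e N := by
    intro k hk
    induction k with
    | zero =>
      have hN0 : N = 0 := by omega
      rw [hN0]
    | succ n ih =>
      rcases Nat.lt_or_ge n N with h | h
      · have : N = n + 1 := by omega
        rw [this]
      · have := hesucc n
        have hb3 : βY n = 0 := hN3 n (by omega)
        rw [ih h] at this
        omega
  have hzero : ∀ k, max N (ℓ + e N) ≤ k → δ k = 0 := by
    intro k hk
    have h1 := hkey k
    have hbk : βX k = 0 := hN1 k (by omega)
    have hgk : γY k = 0 := hN2 k (by omega)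
    have he1 : e k = e N := heconst k (by omega)
    have he2 : e (k + 1) = e N := heconst (k + 1) (by omega)
    have hq1 := hmm k; have hq2 := hmm (k + 1)
    omega
  refine ⟨hanti, ⟨fun a b hab => add_le_add (hγX.1 hab) (hγY.1 hab),
    ⟨max (Classical.choose hγX.2) N2, ?_⟩⟩, ⟨hanti, ⟨max N (ℓ + e N), ?_⟩⟩,
    fun i => ⟨hlower i, hupper i⟩⟩
  · intro n hn
    have h1 := Classical.choose_spec hγX.2 n (by omega)
    have h2 := hN2 n (by omega)
    show γX n + γY n = 0
    omega
  · exact fun n hn => hzero n hn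

end LRGE
end

section
/- Let X = (γ^X, β^X), Y = (γ^Y, β^Y) and Y' = (γ^{Y'}, β^{Y'}) be LR-pairs with |β^Y| = |β^{Y'}| and |γ^Y| = |γ^{Y'}|. If Y ⊴ Y' in the dominance order, then X*Y ⊴ X*Y' in the dominance order. -/
open Module

namespace LRGE

lemma psum_add (f g : ℕ → ℕ) (k : ℕ) :
    psum (fun i => f i + g i) k = psum f k + psum g k := by
  simp [psum, Finset.sum_add_distrib]

lemma gbsum_mono_s13 (a b c : ℕ → ℕ) : Monotone (gbsum a b c) := by
  apply monotone_nat_of_le_succ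
  intro k
  unfold gbsum psum
  gcongr <;> omega

lemma psum_geBeta_s13 (a b c : ℕ → ℕ) (k : ℕ) :
    psum (geBeta a b c) k = gbsum a b c k := by
  induction k with
  | zero => simp [psum, gbsum]
  | succ k ih =>
    have h : gbsum a b c k ≤ gbsum a b c (k + 1) := gbsum_mono_s13 a b c (Nat.le_succ k)
    rw [psum, Finset.sum_range_succ, ← psum, ih, geBeta]
    omega

lemma support_eq_Iio (f : ℕ → ℕ) (hf : IsPartition f) :
    {i | f i ≠ 0} = Set.Iio (numParts f) := by
  obtain ⟨hmono, N, hN⟩ := hf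
  have hsub : {i | f i ≠ 0} ⊆ Set.Iio N := by
    intro i hi
    by_contra h
    exact hi (hN i (le_of_not_gt h))
  have hfin : {i | f i ≠ 0}.Finite := (Set.finite_Iio N).subset hsub
  have hdc : ∀ i j : ℕ, j ≤ i → f i ≠ 0 → f j ≠ 0 := by
    intro i j hji hi
    have := hmono hji
    omega
  ext i
  simp only [Set.mem_setOf_eq, Set.mem_Iio]
  constructor
  · intro hi
    have hsub2 : (↑(Finset.range (i + 1)) : Set ℕ) ⊆ {j | f j ≠ 0} := by
      intro j hj
      simp only [Finset.coe_range, Set.mem_Iio] at hj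
      exact hdc i j (Nat.lt_succ_iff.mp hj) hi
    have := Set.ncard_le_ncard hsub2 hfin
    rw [Set.ncard_coe_finset, Finset.card_range] at this
    exact Nat.lt_of_succ_le (by simpa [numParts] using this)
  · intro hi
    by_contra h
    have hsub2 : {j | f j ≠ 0} ⊆ (↑(Finset.range i) : Set ℕ) := by
      intro j hj
      simp only [Finset.coe_range, Set.mem_Iio]
      by_contra hji
      push_neg at hji
      have := hmono hji
      simp only [Set.mem_setOf_eq] at hj
      omega
    have := Set.ncard_le_ncard hsub2 (Finset.range i).finite_toSet
    rw [Set.ncard_coe_finset, Finset.card_range] at this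
    have : numParts f ≤ i := by simpa [numParts] using this
    omega

lemma psum_numParts (f : ℕ → ℕ) (hf : IsPartition f) :
    psum f (numParts f) = ∑ᶠ i, f i := by
  rw [psum, eq_comm]
  apply finsum_eq_finset_sum_of_support_subset
  rw [Finset.coe_range]
  intro i hi
  rw [Function.mem_support] at hi
  have := support_eq_Iio f hf
  exact (Set.ext_iff.mp this i).mp hi

lemma numParts_le (f g : ℕ → ℕ) (hf : IsPartition f) (hg : IsPartition g)
    (hsum : ∑ᶠ i, f i = ∑ᶠ i, g i)
    (hdom : ∀ k, 1 ≤ k → psum g k ≤ psum f k) :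
    numParts f ≤ numParts g := by
  by_contra h
  push_neg at h
  have hfi : ∀ i, i < (numParts f) → f i ≠ 0 := by
    intro i hi
    have := support_eq_Iio f hf
    exact (Set.ext_iff.mp this i).mpr hi
  have hpsum_mono : ∀ a b : ℕ, a ≤ b → psum f a ≤ psum f b := by
    intro a b hab
    exact Finset.sum_le_sum_of_subset (Finset.range_subset_range.2 hab)
  have hstrict : psum f (numParts g) < psum f (numParts f) := by
    have h1 : psum f ((numParts g) + 1) = psum f (numParts g) + f (numParts g) := Finset.sum_range_succ f (numParts g)
    have h2 : f (numParts g) ≠ 0 := hfi (numParts g) h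
    have h3 : psum f ((numParts g) + 1) ≤ psum f (numParts f) := hpsum_mono _ _ h
    omega
  rw [psum_numParts f hf, hsum, ← psum_numParts g hg] at hstrict
  -- psum g (numParts g) < psum f (numParts g)  would contradict. First handle (numParts g) = 0:
  rcases Nat.eq_zero_or_pos (numParts g) with h0 | h0
  · rw [h0] at hstrict
    simp [psum] at hstrict
  · exact absurd (hdom (numParts g) h0) (not_le.mpr hstrict)

/-- If `Y ⊴ Y'` in the dominance order (with `|β^Y| = |β^{Y'}|` and
`|γ^Y| = |γ^{Y'}|`), then `X*Y ⊴ X*Y'`. -/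
theorem gext_mono_right (γX βX γY βY γY' βY' : ℕ → ℕ)
    (hX : IsLRPair γX βX) (hY : IsLRPair γY βY) (hY' : IsLRPair γY' βY')
    (hβ : ∑ᶠ i, βY i = ∑ᶠ i, βY' i) (hγ : ∑ᶠ i, γY i = ∑ᶠ i, γY' i)
    (hdom : domLE (γY, βY) (γY', βY')) :
    domLE (gext (γX, βX) (γY, βY)) (gext (γX, βX) (γY', βY')) := by
  have hnp : numParts βY ≤ numParts βY' :=
    numParts_le βY βY' hY.2.1 hY'.2.1 hβ (fun k hk => (hdom k hk).2)
  intro k hk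
  constructor
  · show psum (fun i => γY' i + γX i) k ≤ psum (fun i => γY i + γX i) k
    rw [psum_add, psum_add]
    exact Nat.add_le_add_right (hdom k hk).1 _
  · show psum (geBeta βY' γX βX) k ≤ psum (geBeta βY γX βX) k
    rw [psum_geBeta_s13, psum_geBeta_s13]
    unfold gbsum
    have h1 : psum βY' k ≤ psum βY k := (hdom k hk).2
    have h2 : k - numParts βY' ≤ k - numParts βY := Nat.sub_le_sub_left hnp k
    have h3 : min (k - numParts βY') (∑ i ∈ Finset.range k, (βX i - γX i)) ≤
        min (k - numParts βY) (∑ i ∈ Finset.range k, (βX i - γX i)) :=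
      min_le_min h2 le_rfl
    omega

end LRGE
end
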